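/- The model-checking problem for CCTLb is decidable: with respect to a natural encoding of triples (S,q,Φ) consisting of a finite Kripke structure S, a state q of S and a CCTLb formula Φ, the predicate 'q ⊨_S Φ' is computable. (The paper sharpens this to Δ₂ᴾ-completeness.) -/

import Mathlib

open scoped Classical

noncomputable section

/-- A Kripke structure over atomic propositions indexed by `ℕ`. -/
structure Kripke (Q : Type) where
  R : Q → Q → Prop
  total : ∀ q, ∃ q', R q q'
  label : Q → ℕ → Prop

/-- An (infinite) run of a Kripke structure. -/
def Kripke.Run {Q : Type} (S : Kripke Q) (ρ : ℕ → Q) : Prop :=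
  ∀ i, S.R (ρ i) (ρ (i + 1))

/-- The strict prefix `ρ(0) ⋯ ρ(n-1)` of a run (`n` states). -/
def runPrefix {Q : Type} (ρ : ℕ → Q) (n : ℕ) : List Q :=
  (List.range n).map ρ

/-- The number of states of a finite prefix satisfying a predicate. -/
def countSat {Q : Type} (p : Q → Prop) : List Q → ℕ
  | [] => 0
  | s :: t => (if p s then 1 else 0) + countSat p t

/-- Comparison operators `<, ≤, =, ≥, >`. -/
inductive Cmp where
  | lt | le | eq | ge | gt

def Cmp.eval : Cmp → ℕ → ℕ → Prop
  | .lt, a, b => a < b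
  | .le, a, b => a ≤ b
  | .eq, a, b => a = b
  | .ge, a, b => a ≥ b
  | .gt, a, b => a > b

mutual
/-- CCTLb formulas. -/
inductive CForm : Type where
  | atom : ℕ → CForm
  | and : CForm → CForm → CForm
  | not : CForm → CForm
  | eu : CForm → Constr → CForm → CForm
  | au : CForm → Constr → CForm → CForm

/-- Linear expressions `Σᵢ αᵢ·#φᵢ` with natural coefficients. -/
inductive LinExp : Type where
  | term : ℕ → CForm → LinExp
  | add : LinExp → LinExp → LinExp

/-- Boolean combinations of atomic constraints `(Σᵢ αᵢ·#φᵢ) ∼ k`. -/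
inductive Constr : Type where
  | atomic : LinExp → Cmp → ℕ → Constr
  | cand : Constr → Constr → Constr
  | cnot : Constr → Constr
end

mutual
/-- Satisfaction of a CCTLb formula at a state. -/
def sat {Q : Type} (S : Kripke Q) : CForm → Q → Prop
  | .atom p, q => S.label q p
  | .and φ ψ, q => sat S φ q ∧ sat S ψ q
  | .not φ, q => ¬ sat S φ q
  | .eu φ C ψ, q => ∃ ρ, S.Run ρ ∧ ρ 0 = q ∧
      ∃ i, sat S ψ (ρ i) ∧ csat S C (runPrefix ρ i) ∧ ∀ j < i, sat S φ (ρ j)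
  | .au φ C ψ, q => ∀ ρ, S.Run ρ → ρ 0 = q →
      ∃ i, sat S ψ (ρ i) ∧ csat S C (runPrefix ρ i) ∧ ∀ j < i, sat S φ (ρ j)
termination_by φ _ => sizeOf φ

def lval {Q : Type} (S : Kripke Q) : LinExp → List Q → ℕ
  | .term a φ, σ => a * countSat (fun s => sat S φ s) σ
  | .add e f, σ => lval S e σ + lval S f σ
termination_by e _ => sizeOf e

def csat {Q : Type} (S : Kripke Q) : Constr → List Q → Prop
  | .atomic e c k, σ => c.eval (lval S e σ) k
  | .cand C D, σ => csat S C σ ∧ csat S D σ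
  | .cnot C, σ => ¬ csat S C σ
termination_by C _ => sizeOf C
end

mutual
/-- A natural (Gödel) encoding of formulas as natural numbers. -/
def encForm : CForm → ℕ
  | .atom p => Nat.pair 0 p
  | .and φ ψ => Nat.pair 1 (Nat.pair (encForm φ) (encForm ψ))
  | .not φ => Nat.pair 2 (encForm φ)
  | .eu φ C ψ => Nat.pair 3 (Nat.pair (encForm φ) (Nat.pair (encConstr C) (encForm ψ)))
  | .au φ C ψ => Nat.pair 4 (Nat.pair (encForm φ) (Nat.pair (encConstr C) (encForm ψ)))

def encLin : LinExp → ℕ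
  | .term a φ => Nat.pair 0 (Nat.pair a (encForm φ))
  | .add e f => Nat.pair 1 (Nat.pair (encLin e) (encLin f))

def encConstr : Constr → ℕ
  | .atomic e c k =>
      Nat.pair 0 (Nat.pair (encLin e)
        (Nat.pair (match c with | .lt => 0 | .le => 1 | .eq => 2 | .ge => 3 | .gt => 4) k))
  | .cand C D => Nat.pair 1 (Nat.pair (encConstr C) (encConstr D))
  | .cnot C => Nat.pair 2 (encConstr C)
end

/-- A finite presentation of a Kripke structure. -/
structure FinKS where
  n : ℕ
  edges : List (ℕ × ℕ)
  labels : List (ℕ × ℕ)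

/-- Totality of the presented transition relation. -/
def FinKS.Total (M : FinKS) : Prop :=
  ∀ q : Fin M.n, ∃ q' : Fin M.n, ((q : ℕ), (q' : ℕ)) ∈ M.edges

/-- The Kripke structure presented by `M`. -/
def FinKS.toKripke (M : FinKS) (h : M.Total) : Kripke (Fin M.n) where
  R a b := ((a : ℕ), (b : ℕ)) ∈ M.edges
  total := h
  label a p := ((a : ℕ), p) ∈ M.labels

/-- A natural encoding of a finite Kripke structure. -/
def encKS (M : FinKS) : ℕ :=
  Nat.pair M.n (Nat.pair (Encodable.encode M.edges) (Encodable.encode M.labels))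

/-- A natural encoding of a model-checking instance `(S, q, Φ)`. -/
def encTriple (M : FinKS) (q : ℕ) (Φ : CForm) : ℕ :=
  Nat.pair (encKS M) (Nat.pair q (encForm Φ))



namespace MCAux

/-- Lookup in a table of boolean lists. -/
def lkB (T : List (List Bool)) (c s : ℕ) : Bool := (T.getD c []).getD s false

/-- `t`-th digit of `w` in base `n`. -/
def dgt (n w t : ℕ) : ℕ := w / n ^ t % n

def cmpB (c a k : ℕ) : Bool :=
  if c = 0 then decide (a < k)
  else if c = 1 then decide (a ≤ k)
  else if c = 2 then decide (a = k)
  else if c = 3 then decide (k ≤ a)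
  else if c = 4 then decide (k < a)
  else false

def cntB (T : List (List Bool)) (n w i fc : ℕ) : ℕ :=
  ((List.range i).filter fun t => lkB T fc (dgt n w t)).length

def cstep (T : List (List Bool)) (n w i : ℕ) (CT : List (ℕ × Bool)) (c : ℕ) : ℕ × Bool :=
  ((if c.unpair.1 = 0 then c.unpair.2.unpair.1 * cntB T n w i c.unpair.2.unpair.2
    else if c.unpair.1 = 1 then
      (CT.getD c.unpair.2.unpair.1 (0, false)).1 + (CT.getD c.unpair.2.unpair.2 (0, false)).1
    else 0),
   (if c.unpair.1 = 0 then
      cmpB c.unpair.2.unpair.2.unpair.1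
        (if c.unpair.2.unpair.1 < c then (CT.getD c.unpair.2.unpair.1 (0, false)).1 else 0)
        c.unpair.2.unpair.2.unpair.2
    else if c.unpair.1 = 1 then
      (CT.getD c.unpair.2.unpair.1 (0, false)).2 && (CT.getD c.unpair.2.unpair.2 (0, false)).2
    else if c.unpair.1 = 2 then !(CT.getD c.unpair.2 (0, false)).2
    else false))

def ctab (T : List (List Bool)) (n w i : ℕ) : ℕ → List (ℕ × Bool)
  | 0 => []
  | k + 1 => ctab T n w i k ++ [cstep T n w i (ctab T n w i k) k]

def evL (T : List (List Bool)) (n w i ec : ℕ) : ℕ := ((ctab T n w i (ec + 1)).getD ec (0, false)).1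

def evC (T : List (List Bool)) (n w i Cc : ℕ) : Bool := ((ctab T n w i (Cc + 1)).getD Cc (0, false)).2

def edgeB (E : List (ℕ × ℕ)) (x y : ℕ) : Bool := E.any fun pr => decide (pr.1 = x) && decide (pr.2 = y)

def lblB (Lb : List (ℕ × ℕ)) (s p : ℕ) : Bool := Lb.any fun pr => decide (pr.1 = s) && decide (pr.2 = p)

def bEx (k : ℕ) (p : ℕ → Bool) : Bool := (List.range k).any p

def bAll (k : ℕ) (p : ℕ → Bool) : Bool := (List.range k).all p

/-- Bound on the number of product states. -/
def NBd (n c : ℕ) : ℕ := n * (c + 2) ^ (c + 2)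

def isPathB (E : List (ℕ × ℕ)) (n w m : ℕ) : Bool :=
  bAll m fun t => edgeB E (dgt n w t) (dgt n w (t + 1))

def euB (n : ℕ) (E : List (ℕ × ℕ)) (T : List (List Bool)) (c fc Cc gc q : ℕ) : Bool :=
  bEx (NBd n c + 1) fun i => bEx (n ^ (i + 1)) fun w =>
    decide (dgt n w 0 = q) && isPathB E n w i &&
    bAll i (fun t => lkB T fc (dgt n w t)) &&
    lkB T gc (dgt n w i) && evC T n w i Cc

def badB (T : List (List Bool)) (n w Cc gc t : ℕ) : Bool := !(lkB T gc (dgt n w t) && evC T n w t Cc)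

def auvB (n : ℕ) (E : List (ℕ × ℕ)) (T : List (List Bool)) (c fc Cc gc q : ℕ) : Bool :=
  (bEx (NBd n c + 1) fun m => bEx (n ^ (m + 1)) fun w =>
    decide (dgt n w 0 = q) && isPathB E n w m &&
    bAll m (fun t => lkB T fc (dgt n w t) && badB T n w Cc gc t) &&
    badB T n w Cc gc m && !(lkB T fc (dgt n w m)))
  || (bEx (n ^ (NBd n c + 1)) fun w =>
    decide (dgt n w 0 = q) && isPathB E n w (NBd n c) &&
    bAll (NBd n c + 1) (fun t => lkB T fc (dgt n w t) && badB T n w Cc gc t))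

def fstep (n : ℕ) (E Lb : List (ℕ × ℕ)) (T : List (List Bool)) (c : ℕ) : List Bool :=
  if c.unpair.1 = 0 then (List.range n).map fun s => lblB Lb s c.unpair.2
  else if c.unpair.1 = 1 then
    (List.range n).map fun s => lkB T c.unpair.2.unpair.1 s && lkB T c.unpair.2.unpair.2 s
  else if c.unpair.1 = 2 then (List.range n).map fun s => !lkB T c.unpair.2 s
  else if c.unpair.1 = 3 then (List.range n).map fun q =>
    euB n E T c c.unpair.2.unpair.1 c.unpair.2.unpair.2.unpair.1 c.unpair.2.unpair.2.unpair.2 q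
  else if c.unpair.1 = 4 then (List.range n).map fun q =>
    !auvB n E T c c.unpair.2.unpair.1 c.unpair.2.unpair.2.unpair.1 c.unpair.2.unpair.2.unpair.2 q
  else []

def ftab (n : ℕ) (E Lb : List (ℕ × ℕ)) : ℕ → List (List Bool)
  | 0 => []
  | k + 1 => ftab n E Lb k ++ [fstep n E Lb (ftab n E Lb k) k]

def fMain (x : ℕ) : Bool :=
  lkB (ftab x.unpair.1.unpair.1
        ((Encodable.decode x.unpair.1.unpair.2.unpair.1 : Option (List (ℕ × ℕ))).getD [])
        ((Encodable.decode x.unpair.1.unpair.2.unpair.2 : Option (List (ℕ × ℕ))).getD [])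
        (x.unpair.2.unpair.2 + 1)) x.unpair.2.unpair.2 x.unpair.2.unpair.1


section PrimProofs

open Primrec

private lemma pow_primrec : Primrec₂ ((· ^ ·) : ℕ → ℕ → ℕ) :=
  Primrec₂.unpaired'.mp Nat.Primrec.pow

variable {α : Type} [Primcodable α]

private lemma unpair1_primrec {f : α → ℕ} (hf : Primrec f) :
    Primrec fun a => (f a).unpair.1 := Primrec.fst.comp (Primrec.unpair.comp hf)

private lemma unpair2_primrec {f : α → ℕ} (hf : Primrec f) :
    Primrec fun a => (f a).unpair.2 := Primrec.snd.comp (Primrec.unpair.comp hf)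

private lemma lkB_primrec {T : α → List (List Bool)} {c s : α → ℕ}
    (hT : Primrec T) (hc : Primrec c) (hs : Primrec s) :
    Primrec fun a => lkB (T a) (c a) (s a) :=
  (Primrec.list_getD false).comp ((Primrec.list_getD ([] : List Bool)).comp hT hc) hs

private lemma dgt_primrec {n w t : α → ℕ} (hn : Primrec n) (hw : Primrec w) (ht : Primrec t) :
    Primrec fun a => dgt (n a) (w a) (t a) :=
  Primrec.nat_mod.comp (Primrec.nat_div.comp hw (pow_primrec.comp hn ht)) hn

private lemma eqb_primrec {f g : α → ℕ} (hf : Primrec f) (hg : Primrec g) :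
    Primrec fun a => decide (f a = g a) := (Primrec.eq.comp hf hg).decide

private lemma ltb_primrec {f g : α → ℕ} (hf : Primrec f) (hg : Primrec g) :
    Primrec fun a => decide (f a < g a) := (Primrec.nat_lt.comp hf hg).decide

private lemma leb_primrec {f g : α → ℕ} (hf : Primrec f) (hg : Primrec g) :
    Primrec fun a => decide (f a ≤ g a) := (Primrec.nat_le.comp hf hg).decide

private lemma ite_eq_primrec {c d : α → ℕ} {f g : α → σ} [Primcodable σ]
    (hc : Primrec c) (hd : Primrec d) (hf : Primrec f) (hg : Primrec g) :
    Primrec fun a => if c a = d a then f a else g a :=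
  Primrec.ite (Primrec.eq.comp hc hd) hf hg

private lemma ite_lt_primrec {c d : α → ℕ} {f g : α → σ} [Primcodable σ]
    (hc : Primrec c) (hd : Primrec d) (hf : Primrec f) (hg : Primrec g) :
    Primrec fun a => if c a < d a then f a else g a :=
  Primrec.ite (Primrec.nat_lt.comp hc hd) hf hg

private lemma cmpB_primrec {c a' k : α → ℕ} (hc : Primrec c) (ha : Primrec a')
    (hk : Primrec k) : Primrec fun a => cmpB (c a) (a' a) (k a) := by
  unfold cmpB
  exact ite_eq_primrec hc (Primrec.const 0) (ltb_primrec ha hk) <|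
    ite_eq_primrec hc (Primrec.const 1) (leb_primrec ha hk) <|
    ite_eq_primrec hc (Primrec.const 2) (eqb_primrec ha hk) <|
    ite_eq_primrec hc (Primrec.const 3) (leb_primrec hk ha) <|
    ite_eq_primrec hc (Primrec.const 4) (ltb_primrec hk ha) (Primrec.const false)

private lemma foldr_cnt (p : ℕ → Bool) (l : List ℕ) :
    (l.filter p).length = l.foldr (fun t acc => if p t = true then acc + 1 else acc) 0 := by
  induction l with
  | nil => rfl
  | cons x xs ih => by_cases h : p x = true <;> simp [List.filter_cons, h, ih]

private lemma cntB_primrec {T : α → List (List Bool)} {n w i fc : α → ℕ}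
    (hT : Primrec T) (hn : Primrec n) (hw : Primrec w) (hi : Primrec i) (hfc : Primrec fc) :
    Primrec fun a => cntB (T a) (n a) (w a) (i a) (fc a) := by
  have step : Primrec₂ fun (a : α) (p : ℕ × ℕ) =>
      if lkB (T a) (fc a) (dgt (n a) (w a) p.1) = true then p.2 + 1 else p.2 := by
    apply Primrec.ite
    · exact Primrec.eq.comp
        (lkB_primrec (hT.comp Primrec.fst) (hfc.comp Primrec.fst)
          (dgt_primrec (hn.comp Primrec.fst) (hw.comp Primrec.fst)
            (Primrec.fst.comp Primrec.snd))) (Primrec.const true)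
    · exact Primrec.succ.comp (Primrec.snd.comp Primrec.snd)
    · exact Primrec.snd.comp Primrec.snd
  have : Primrec fun a => (List.range (i a)).foldr
      (fun t acc => if lkB (T a) (fc a) (dgt (n a) (w a) t) = true then acc + 1 else acc) 0 :=
    Primrec.list_foldr (Primrec.list_range.comp hi) (Primrec.const 0) step
  exact this.of_eq fun a => (foldr_cnt _ _).symm

private lemma getDfst_primrec {CT : α → List (ℕ × Bool)} {c : α → ℕ}
    (hCT : Primrec CT) (hc : Primrec c) :
    Primrec fun a => ((CT a).getD (c a) (0, false)).1 :=
  Primrec.fst.comp ((Primrec.list_getD ((0 : ℕ), false)).comp hCT hc)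

private lemma getDsnd_primrec {CT : α → List (ℕ × Bool)} {c : α → ℕ}
    (hCT : Primrec CT) (hc : Primrec c) :
    Primrec fun a => ((CT a).getD (c a) (0, false)).2 :=
  Primrec.snd.comp ((Primrec.list_getD ((0 : ℕ), false)).comp hCT hc)

private lemma cstep_primrec {T : α → List (List Bool)} {n w i : α → ℕ}
    {CT : α → List (ℕ × Bool)} {c : α → ℕ}
    (hT : Primrec T) (hn : Primrec n) (hw : Primrec w) (hi : Primrec i)
    (hCT : Primrec CT) (hc : Primrec c) :
    Primrec fun a => cstep (T a) (n a) (w a) (i a) (CT a) (c a) := by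
  unfold cstep
  have ht := unpair1_primrec hc
  have hr := unpair2_primrec hc
  have hr1 := unpair1_primrec hr
  have hr2 := unpair2_primrec hr
  apply Primrec.pair
  · exact ite_eq_primrec ht (Primrec.const 0)
      (Primrec.nat_mul.comp hr1 (cntB_primrec hT hn hw hi hr2)) <|
      ite_eq_primrec ht (Primrec.const 1)
        (Primrec.nat_add.comp (getDfst_primrec hCT hr1) (getDfst_primrec hCT hr2))
        (Primrec.const 0)
  · exact ite_eq_primrec ht (Primrec.const 0)
      (cmpB_primrec (unpair1_primrec hr2)
        (ite_lt_primrec hr1 hc (getDfst_primrec hCT hr1) (Primrec.const 0))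
        (unpair2_primrec hr2)) <|
      ite_eq_primrec ht (Primrec.const 1)
        (Primrec.and.comp (getDsnd_primrec hCT hr1) (getDsnd_primrec hCT hr2)) <|
      ite_eq_primrec ht (Primrec.const 2)
        (Primrec.not.comp (getDsnd_primrec hCT hr)) (Primrec.const false)

private lemma ctab_primrec {T : α → List (List Bool)} {n w i k : α → ℕ}
    (hT : Primrec T) (hn : Primrec n) (hw : Primrec w) (hi : Primrec i) (hk : Primrec k) :
    Primrec fun a => ctab (T a) (n a) (w a) (i a) (k a) := by
  have step : Primrec₂ fun (a : α) (p : ℕ × List (ℕ × Bool)) =>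
      p.2 ++ [cstep (T a) (n a) (w a) (i a) p.2 p.1] := by
    refine Primrec.list_append.comp (Primrec.snd.comp Primrec.snd) ?_
    refine (Primrec.list_cons.comp ?_ (Primrec.const []))
    exact cstep_primrec (hT.comp Primrec.fst) (hn.comp Primrec.fst) (hw.comp Primrec.fst)
      (hi.comp Primrec.fst) (Primrec.snd.comp Primrec.snd) (Primrec.fst.comp Primrec.snd)
  have := Primrec.nat_rec' hk (Primrec.const ([] : List (ℕ × Bool))) step
  exact this.of_eq fun a => by
    induction k a with
    | zero => rfl
    | succ m ih => simp [ctab, ← ih]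

private lemma evL_primrec {T : α → List (List Bool)} {n w i ec : α → ℕ}
    (hT : Primrec T) (hn : Primrec n) (hw : Primrec w) (hi : Primrec i) (hec : Primrec ec) :
    Primrec fun a => evL (T a) (n a) (w a) (i a) (ec a) :=
  getDfst_primrec (ctab_primrec hT hn hw hi (Primrec.succ.comp hec)) hec

private lemma evC_primrec {T : α → List (List Bool)} {n w i Cc : α → ℕ}
    (hT : Primrec T) (hn : Primrec n) (hw : Primrec w) (hi : Primrec i) (hCc : Primrec Cc) :
    Primrec fun a => evC (T a) (n a) (w a) (i a) (Cc a) :=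
  getDsnd_primrec (ctab_primrec hT hn hw hi (Primrec.succ.comp hCc)) hCc

private lemma any_eq_foldr (p : β → Bool) (l : List β) :
    l.any p = l.foldr (fun x acc => p x || acc) false := by
  induction l with
  | nil => rfl
  | cons x xs ih => simp [ih]

private lemma all_eq_foldr (p : β → Bool) (l : List β) :
    l.all p = l.foldr (fun x acc => p x && acc) true := by
  induction l with
  | nil => rfl
  | cons x xs ih => simp [ih]

private lemma anyP_primrec [Primcodable β] {l : α → List β} {p : α → β → Bool}
    (hl : Primrec l) (hp : Primrec₂ p) : Primrec fun a => (l a).any (p a) := by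
  have step : Primrec₂ fun (a : α) (x : β × Bool) => p a x.1 || x.2 :=
    Primrec.or.comp (hp.comp Primrec.fst (Primrec.fst.comp Primrec.snd))
      (Primrec.snd.comp Primrec.snd)
  have : Primrec fun a => (l a).foldr (fun x acc => p a x || acc) false :=
    Primrec.list_foldr hl (Primrec.const false) step
  exact this.of_eq fun a => (any_eq_foldr _ _).symm

private lemma allP_primrec [Primcodable β] {l : α → List β} {p : α → β → Bool}
    (hl : Primrec l) (hp : Primrec₂ p) : Primrec fun a => (l a).all (p a) := by
  have step : Primrec₂ fun (a : α) (x : β × Bool) => p a x.1 && x.2 :=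
    Primrec.and.comp (hp.comp Primrec.fst (Primrec.fst.comp Primrec.snd))
      (Primrec.snd.comp Primrec.snd)
  have : Primrec fun a => (l a).foldr (fun x acc => p a x && acc) true :=
    Primrec.list_foldr hl (Primrec.const true) step
  exact this.of_eq fun a => (all_eq_foldr _ _).symm

private lemma bEx_primrec {k : α → ℕ} {p : α → ℕ → Bool} (hk : Primrec k)
    (hp : Primrec₂ p) : Primrec fun a => bEx (k a) (p a) :=
  anyP_primrec (Primrec.list_range.comp hk) hp

private lemma bAll_primrec {k : α → ℕ} {p : α → ℕ → Bool} (hk : Primrec k)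
    (hp : Primrec₂ p) : Primrec fun a => bAll (k a) (p a) :=
  allP_primrec (Primrec.list_range.comp hk) hp

private lemma edgeB_primrec {E : α → List (ℕ × ℕ)} {x y : α → ℕ}
    (hE : Primrec E) (hx : Primrec x) (hy : Primrec y) :
    Primrec fun a => edgeB (E a) (x a) (y a) := by
  unfold edgeB
  exact anyP_primrec hE
    (Primrec.and.comp
      (eqb_primrec (Primrec.fst.comp Primrec.snd) (hx.comp Primrec.fst))
      (eqb_primrec (Primrec.snd.comp Primrec.snd) (hy.comp Primrec.fst)))

private lemma lblB_primrec {Lb : α → List (ℕ × ℕ)} {s p : α → ℕ}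
    (hL : Primrec Lb) (hs : Primrec s) (hp : Primrec p) :
    Primrec fun a => lblB (Lb a) (s a) (p a) := by
  unfold lblB
  exact anyP_primrec hL
    (Primrec.and.comp
      (eqb_primrec (Primrec.fst.comp Primrec.snd) (hs.comp Primrec.fst))
      (eqb_primrec (Primrec.snd.comp Primrec.snd) (hp.comp Primrec.fst)))

private lemma NBd_primrec {n c : α → ℕ} (hn : Primrec n) (hc : Primrec c) :
    Primrec fun a => NBd (n a) (c a) := by
  unfold NBd
  have h2 : Primrec fun a => c a + 2 := Primrec.succ.comp (Primrec.succ.comp hc)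
  exact Primrec.nat_mul.comp hn (pow_primrec.comp h2 h2)

private lemma isPathB_primrec {E : α → List (ℕ × ℕ)} {n w m : α → ℕ}
    (hE : Primrec E) (hn : Primrec n) (hw : Primrec w) (hm : Primrec m) :
    Primrec fun a => isPathB (E a) (n a) (w a) (m a) := by
  unfold isPathB
  exact bAll_primrec hm
    (edgeB_primrec (hE.comp Primrec.fst)
      (dgt_primrec (hn.comp Primrec.fst) (hw.comp Primrec.fst) Primrec.snd)
      (dgt_primrec (hn.comp Primrec.fst) (hw.comp Primrec.fst)
        (Primrec.succ.comp Primrec.snd)))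

private lemma badB_primrec {T : α → List (List Bool)} {n w Cc gc t : α → ℕ}
    (hT : Primrec T) (hn : Primrec n) (hw : Primrec w) (hCc : Primrec Cc)
    (hgc : Primrec gc) (ht : Primrec t) :
    Primrec fun a => badB (T a) (n a) (w a) (Cc a) (gc a) (t a) := by
  unfold badB
  exact Primrec.not.comp (Primrec.and.comp
    (lkB_primrec hT hgc (dgt_primrec hn hw ht)) (evC_primrec hT hn hw ht hCc))

private lemma euB_primrec {n : α → ℕ} {E : α → List (ℕ × ℕ)} {T : α → List (List Bool)}
    {c fc Cc gc q : α → ℕ} (hn : Primrec n) (hE : Primrec E) (hT : Primrec T)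
    (hc : Primrec c) (hfc : Primrec fc) (hCc : Primrec Cc) (hgc : Primrec gc)
    (hq : Primrec q) :
    Primrec fun a => euB (n a) (E a) (T a) (c a) (fc a) (Cc a) (gc a) (q a) := by
  unfold euB
  apply bEx_primrec (Primrec.succ.comp (NBd_primrec hn hc))
  -- now at (a, i)
  apply bEx_primrec (pow_primrec.comp (hn.comp Primrec.fst) (Primrec.succ.comp Primrec.snd))
  -- now at ((a, i), w) : (α × ℕ) × ℕ
  set A : (α × ℕ) × ℕ → α := fun x => x.1.1 with hA
  have pA : Primrec A := Primrec.fst.comp Primrec.fst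
  have pi : Primrec fun x : (α × ℕ) × ℕ => x.1.2 := Primrec.snd.comp Primrec.fst
  have pw : Primrec fun x : (α × ℕ) × ℕ => x.2 := Primrec.snd
  have pn := hn.comp pA
  have pd0 := dgt_primrec pn pw (Primrec.const 0)
  refine Primrec.and.comp (Primrec.and.comp (Primrec.and.comp (Primrec.and.comp ?_ ?_) ?_) ?_) ?_
  · exact eqb_primrec pd0 (hq.comp pA)
  · exact isPathB_primrec (hE.comp pA) pn pw pi
  · exact bAll_primrec pi
      (lkB_primrec (hT.comp (pA.comp Primrec.fst)) (hfc.comp (pA.comp Primrec.fst))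
        (dgt_primrec (pn.comp Primrec.fst) (pw.comp Primrec.fst) Primrec.snd))
  · exact lkB_primrec (hT.comp pA) (hgc.comp pA) (dgt_primrec pn pw pi)
  · exact evC_primrec (hT.comp pA) pn pw pi (hCc.comp pA)

private lemma auvB_primrec {n : α → ℕ} {E : α → List (ℕ × ℕ)} {T : α → List (List Bool)}
    {c fc Cc gc q : α → ℕ} (hn : Primrec n) (hE : Primrec E) (hT : Primrec T)
    (hc : Primrec c) (hfc : Primrec fc) (hCc : Primrec Cc) (hgc : Primrec gc)
    (hq : Primrec q) :
    Primrec fun a => auvB (n a) (E a) (T a) (c a) (fc a) (Cc a) (gc a) (q a) := by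
  unfold auvB
  apply Primrec.or.comp
  · apply bEx_primrec (Primrec.succ.comp (NBd_primrec hn hc))
    apply bEx_primrec (pow_primrec.comp (hn.comp Primrec.fst) (Primrec.succ.comp Primrec.snd))
    set A : (α × ℕ) × ℕ → α := fun x => x.1.1 with hA
    have pA : Primrec A := Primrec.fst.comp Primrec.fst
    have pm : Primrec fun x : (α × ℕ) × ℕ => x.1.2 := Primrec.snd.comp Primrec.fst
    have pw : Primrec fun x : (α × ℕ) × ℕ => x.2 := Primrec.snd
    have pn := hn.comp pA
    refine Primrec.and.comp (Primrec.and.comp (Primrec.and.comp (Primrec.and.comp ?_ ?_) ?_) ?_) ?_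
    · exact eqb_primrec (dgt_primrec pn pw (Primrec.const 0)) (hq.comp pA)
    · exact isPathB_primrec (hE.comp pA) pn pw pm
    · exact bAll_primrec pm
        (Primrec.and.comp
          (lkB_primrec (hT.comp (pA.comp Primrec.fst)) (hfc.comp (pA.comp Primrec.fst))
            (dgt_primrec (pn.comp Primrec.fst) (pw.comp Primrec.fst) Primrec.snd))
          (badB_primrec (hT.comp (pA.comp Primrec.fst)) (pn.comp Primrec.fst)
            (pw.comp Primrec.fst) (hCc.comp (pA.comp Primrec.fst))
            (hgc.comp (pA.comp Primrec.fst)) Primrec.snd))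
    · exact badB_primrec (hT.comp pA) pn pw (hCc.comp pA) (hgc.comp pA) pm
    · exact Primrec.not.comp (lkB_primrec (hT.comp pA) (hfc.comp pA) (dgt_primrec pn pw pm))
  · apply bEx_primrec (pow_primrec.comp hn (Primrec.succ.comp (NBd_primrec hn hc)))
    have pA : Primrec fun x : α × ℕ => x.1 := Primrec.fst
    have pw : Primrec fun x : α × ℕ => x.2 := Primrec.snd
    have pn := hn.comp pA
    refine Primrec.and.comp (Primrec.and.comp ?_ ?_) ?_
    · exact eqb_primrec (dgt_primrec pn pw (Primrec.const 0)) (hq.comp pA)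
    · exact isPathB_primrec (hE.comp pA) pn pw (NBd_primrec pn (hc.comp pA))
    · exact bAll_primrec (Primrec.succ.comp (NBd_primrec pn (hc.comp pA)))
        (Primrec.and.comp
          (lkB_primrec (hT.comp (pA.comp Primrec.fst)) (hfc.comp (pA.comp Primrec.fst))
            (dgt_primrec (pn.comp Primrec.fst) (pw.comp Primrec.fst) Primrec.snd))
          (badB_primrec (hT.comp (pA.comp Primrec.fst)) (pn.comp Primrec.fst)
            (pw.comp Primrec.fst) (hCc.comp (pA.comp Primrec.fst))
            (hgc.comp (pA.comp Primrec.fst)) Primrec.snd))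

private lemma fstep_primrec {n : α → ℕ} {E Lb : α → List (ℕ × ℕ)} {T : α → List (List Bool)}
    {c : α → ℕ} (hn : Primrec n) (hE : Primrec E) (hLb : Primrec Lb) (hT : Primrec T)
    (hc : Primrec c) : Primrec fun a => fstep (n a) (E a) (Lb a) (T a) (c a) := by
  unfold fstep
  have ht := unpair1_primrec hc
  have hr := unpair2_primrec hc
  have hr1 := unpair1_primrec hr
  have hr2 := unpair2_primrec hr
  have hrange : Primrec fun a => List.range (n a) := Primrec.list_range.comp hn
  refine ite_eq_primrec ht (Primrec.const 0)
    (Primrec.list_map hrange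
      (lblB_primrec (hLb.comp Primrec.fst) Primrec.snd (hr.comp Primrec.fst))) <|
    ite_eq_primrec ht (Primrec.const 1)
      (Primrec.list_map hrange
        (Primrec.and.comp
          (lkB_primrec (hT.comp Primrec.fst) (hr1.comp Primrec.fst) Primrec.snd)
          (lkB_primrec (hT.comp Primrec.fst) (hr2.comp Primrec.fst) Primrec.snd))) <|
    ite_eq_primrec ht (Primrec.const 2)
      (Primrec.list_map hrange
        (Primrec.not.comp
          (lkB_primrec (hT.comp Primrec.fst) (hr.comp Primrec.fst) Primrec.snd))) <|
    ite_eq_primrec ht (Primrec.const 3)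
      (Primrec.list_map hrange
        (euB_primrec (hn.comp Primrec.fst) (hE.comp Primrec.fst) (hT.comp Primrec.fst)
          (hc.comp Primrec.fst) (hr1.comp Primrec.fst)
          ((unpair1_primrec hr2).comp Primrec.fst) ((unpair2_primrec hr2).comp Primrec.fst)
          Primrec.snd)) <|
    ite_eq_primrec ht (Primrec.const 4)
      (Primrec.list_map hrange
        (Primrec.not.comp
          (auvB_primrec (hn.comp Primrec.fst) (hE.comp Primrec.fst) (hT.comp Primrec.fst)
            (hc.comp Primrec.fst) (hr1.comp Primrec.fst)
            ((unpair1_primrec hr2).comp Primrec.fst) ((unpair2_primrec hr2).comp Primrec.fst)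
            Primrec.snd)))
      (Primrec.const ([] : List Bool))

private lemma ftab_primrec {n : α → ℕ} {E Lb : α → List (ℕ × ℕ)} {k : α → ℕ}
    (hn : Primrec n) (hE : Primrec E) (hLb : Primrec Lb) (hk : Primrec k) :
    Primrec fun a => ftab (n a) (E a) (Lb a) (k a) := by
  have step : Primrec₂ fun (a : α) (p : ℕ × List (List Bool)) =>
      p.2 ++ [fstep (n a) (E a) (Lb a) p.2 p.1] := by
    refine Primrec.list_append.comp (Primrec.snd.comp Primrec.snd) ?_
    refine Primrec.list_cons.comp ?_ (Primrec.const [])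
    exact fstep_primrec (hn.comp Primrec.fst) (hE.comp Primrec.fst) (hLb.comp Primrec.fst)
      (Primrec.snd.comp Primrec.snd) (Primrec.fst.comp Primrec.snd)
  have := Primrec.nat_rec' hk (Primrec.const ([] : List (List Bool))) step
  exact this.of_eq fun a => by
    induction k a with
    | zero => rfl
    | succ m ih => simp [ftab, ← ih]

lemma fMain_primrec : Primrec fMain := by
  unfold fMain
  have h1 : Primrec fun x : ℕ => x.unpair.1.unpair.1 :=
    unpair1_primrec (unpair1_primrec Primrec.id)
  have hdec : ∀ g : ℕ → ℕ, Primrec g →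
      Primrec fun x : ℕ => ((Encodable.decode (g x) : Option (List (ℕ × ℕ))).getD []) := by
    intro g hg
    exact Primrec.option_getD.comp (Primrec.decode.comp hg) (Primrec.const [])
  have hE := hdec _ (unpair1_primrec (unpair2_primrec (unpair1_primrec Primrec.id)))
  have hLb := hdec _ (unpair2_primrec (unpair2_primrec (unpair1_primrec Primrec.id)))
  have hq : Primrec fun x : ℕ => x.unpair.2.unpair.1 :=
    unpair1_primrec (unpair2_primrec Primrec.id)
  have hFc : Primrec fun x : ℕ => x.unpair.2.unpair.2 :=
    unpair2_primrec (unpair2_primrec Primrec.id)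
  exact lkB_primrec (ftab_primrec h1 hE hLb (Primrec.succ.comp hFc)) hFc hq

lemma fMain_computable : Computable fMain := fMain_primrec.to_comp

end PrimProofs

section Sem

/-! ### Basic facts about `Nat.pair` and the encodings -/

lemma pair_gt_right {t : ℕ} (r : ℕ) (h : 1 ≤ t) : r < Nat.pair t r :=
  lt_of_lt_of_le (by omega) (Nat.add_le_pair t r)

lemma pair_zero_right_le (r : ℕ) : r ≤ Nat.pair 0 r := Nat.right_le_pair 0 r

/-! ### countSat / runPrefix / lval basics -/

variable {Q : Type}

lemma countSat_append (p : Q → Prop) (l l' : List Q) :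
    countSat p (l ++ l') = countSat p l + countSat p l' := by
  induction l with
  | nil => simp [countSat]
  | cons x xs ih => simp [countSat, ih]; omega

lemma lval_append (S : Kripke Q) (e : LinExp) (l l' : List Q) :
    lval S e (l ++ l') = lval S e l + lval S e l' := by
  cases e with
  | term a φ => simp [lval, countSat_append]; ring
  | add e f => simp [lval, lval_append S e l l', lval_append S f l l']; ring
termination_by sizeOf e

lemma runPrefix_zero (ρ : ℕ → Q) : runPrefix ρ 0 = [] := rfl

lemma runPrefix_succ (ρ : ℕ → Q) (i : ℕ) :
    runPrefix ρ (i + 1) = runPrefix ρ i ++ [ρ i] := by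
  simp [runPrefix, List.range_succ]

lemma runPrefix_congr {ρ ρ' : ℕ → Q} {i : ℕ} (h : ∀ t < i, ρ t = ρ' t) :
    runPrefix ρ i = runPrefix ρ' i := by
  simp only [runPrefix]
  exact List.map_congr_left fun t ht => h t (List.mem_range.mp ht)

/-! ### Profiles -/

def atomsC : Constr → List (LinExp × ℕ)
  | .atomic e _ k => [(e, k)]
  | .cand C D => atomsC C ++ atomsC D
  | .cnot C => atomsC C

def profL (S : Kripke Q) (C : Constr) (l : List Q) : List ℕ :=
  (atomsC C).map fun ek => min (lval S ek.1 l) (ek.2 + 1)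

lemma min_cap_add {x y k d : ℕ} (h : min x (k + 1) = min y (k + 1)) :
    min (x + d) (k + 1) = min (y + d) (k + 1) := by omega

lemma profL_snoc_congr (S : Kripke Q) (C : Constr) {l l' : List Q} (s : Q)
    (h : profL S C l = profL S C l') :
    profL S C (l ++ [s]) = profL S C (l' ++ [s]) := by
  unfold profL at *
  refine List.map_congr_left fun ek hek => ?_
  have h2 := List.map_inj_left.mp h ek hek
  rw [lval_append, lval_append]
  exact min_cap_add h2

lemma cmp_eval_of_min_eq {a b k : ℕ} (h : min a (k + 1) = min b (k + 1)) (c : Cmp) :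
    c.eval a k ↔ c.eval b k := by
  cases c <;> simp [Cmp.eval] <;> omega

lemma csat_congr_profL (S : Kripke Q) (C : Constr) {l l' : List Q}
    (h : profL S C l = profL S C l') : csat S C l ↔ csat S C l' := by
  cases C with
  | atomic e c k =>
    simp only [profL, atomsC, List.map_cons, List.map_nil, List.cons.injEq, and_true] at h
    simp only [csat]
    exact cmp_eval_of_min_eq h c
  | cand C D =>
    simp only [profL, atomsC, List.map_append] at h
    have hlen : ((atomsC C).map fun ek => min (lval S ek.1 l) (ek.2 + 1)).length
        = ((atomsC C).map fun ek => min (lval S ek.1 l') (ek.2 + 1)).length := by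
      simp
    obtain ⟨h1, h2⟩ := List.append_inj h hlen
    simp only [csat]
    rw [csat_congr_profL S C h1, csat_congr_profL S D h2]
  | cnot C =>
    simp only [profL, atomsC] at h
    simp only [csat]
    rw [csat_congr_profL S C h]
termination_by sizeOf C

end Sem

section Nodes

/-! ### bounds on atoms of a constraint -/

lemma atomsC_k_le (C : Constr) : ∀ ek ∈ atomsC C, ek.2 ≤ encConstr C := by
  cases C with
  | atomic e c k =>
    rintro ek hek
    simp only [atomsC, List.mem_singleton] at hek
    subst hek
    simp only [encConstr]
    calc (k : ℕ) ≤ Nat.pair _ k := Nat.right_le_pair _ k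
    _ ≤ Nat.pair (encLin e) (Nat.pair _ k) := Nat.right_le_pair _ _
    _ ≤ _ := Nat.right_le_pair _ _
  | cand C D =>
    rintro ek hek
    simp only [atomsC, List.mem_append] at hek
    rcases hek with h | h
    · exact le_trans (atomsC_k_le C ek h) (le_trans (Nat.left_le_pair _ _)
        (le_trans (Nat.right_le_pair _ _) (le_refl _)))
    · exact le_trans (atomsC_k_le D ek h) (le_trans (Nat.right_le_pair _ _)
        (Nat.right_le_pair _ _))
  | cnot C =>
    rintro ek hek
    simp only [atomsC] at hek
    exact le_trans (atomsC_k_le C ek hek) (Nat.right_le_pair _ _)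
termination_by sizeOf C

lemma pair_one_ge (x : ℕ) : x + 1 ≤ Nat.pair 1 x := by
  have := Nat.add_le_pair 1 x; omega

lemma pair_two_ge (x : ℕ) : x + 1 ≤ Nat.pair 2 x := by
  have := Nat.add_le_pair 2 x; omega

lemma atomsC_len_le (C : Constr) : (atomsC C).length ≤ encConstr C + 1 := by
  cases C with
  | atomic e c k => simp [atomsC]
  | cand C D =>
    have h1 := atomsC_len_le C
    have h2 := atomsC_len_le D
    have h3 := Nat.add_le_pair (encConstr C) (encConstr D)
    have h4 := pair_one_ge (Nat.pair (encConstr C) (encConstr D))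
    simp only [atomsC, List.length_append, encConstr]
    omega
  | cnot C =>
    have h1 := atomsC_len_le C
    have h2 := pair_two_ge (encConstr C)
    simp only [atomsC, encConstr]
    omega
termination_by sizeOf C

/-! ### base-β encoding of lists -/

def pcode (β : ℕ) : List ℕ → ℕ
  | [] => 0
  | v :: l => v + β * pcode β l

lemma pcode_lt {β : ℕ} (hβ : 0 < β) : ∀ l : List ℕ, (∀ v ∈ l, v < β) → pcode β l < β ^ l.length := by
  intro l
  induction l with
  | nil => intro _; simpa [pcode] using Nat.pos_pow_of_pos? 0 hβ
  | cons v l ih =>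
    intro h
    have hv : v < β := h v (by simp)
    have hl : pcode β l < β ^ l.length := ih fun x hx => h x (by simp [hx])
    simp only [pcode, List.length_cons, pow_succ]
    calc v + β * pcode β l < β + β * pcode β l := by omega
    _ = β * (pcode β l + 1) := by ring
    _ ≤ β * β ^ l.length := by
        exact Nat.mul_le_mul_left β (by omega)
    _ = β ^ l.length * β := by ring

lemma pcode_inj {β : ℕ} (hβ : 0 < β) :
    ∀ l l' : List ℕ, l.length = l'.length → (∀ v ∈ l, v < β) → (∀ v ∈ l', v < β) →
      pcode β l = pcode β l' → l = l' := by
  intro l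
  induction l with
  | nil => intro l' hlen _ _ _; exact (List.length_eq_zero_iff.mp hlen.symm).symm ▸ rfl
  | cons v l ih =>
    intro l' hlen hv hv' hp
    cases l' with
    | nil => simp at hlen
    | cons w l' =>
      have hvβ : v < β := hv v (by simp)
      have hwβ : w < β := hv' w (by simp)
      simp only [pcode] at hp
      have hvw : v = w := by
        have h1 : (v + β * pcode β l) % β = v := by
          simp [Nat.add_mul_mod_self_left, Nat.mod_eq_of_lt hvβ]
        have h2 : (w + β * pcode β l') % β = w := by
          simp [Nat.add_mul_mod_self_left, Nat.mod_eq_of_lt hwβ]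
        rw [hp] at h1; rw [h2] at h1; exact h1.symm
      subst hvw
      have hrest : pcode β l = pcode β l' := by
        have := Nat.eq_of_mul_eq_mul_left hβ (show β * pcode β l = β * pcode β l' by omega)
        exact this
      have := ih l' (by simpa using hlen) (fun x hx => hv x (by simp [hx]))
        (fun x hx => hv' x (by simp [hx])) hrest
      rw [this]

end Nodes

section Product

variable {N : ℕ} (S : Kripke (Fin N))

/-- The product node of a path at time `t`: current state plus profile of the prefix. -/
def nodeP (C : Constr) (σ : ℕ → Fin N) (t : ℕ) : Fin N × List ℕ :=
  (σ t, profL S C (runPrefix σ t))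

lemma nodeP_state {C : Constr} {σ σ' : ℕ → Fin N} {t u : ℕ}
    (h : nodeP S C σ t = nodeP S C σ' u) : σ t = σ' u := congrArg Prod.fst h

lemma nodeP_prof {C : Constr} {σ σ' : ℕ → Fin N} {t u : ℕ}
    (h : nodeP S C σ t = nodeP S C σ' u) :
    profL S C (runPrefix σ t) = profL S C (runPrefix σ' u) := congrArg Prod.snd h

lemma csat_of_nodeP_eq {C : Constr} {σ σ' : ℕ → Fin N} {t u : ℕ}
    (h : nodeP S C σ t = nodeP S C σ' u) :
    csat S C (runPrefix σ t) ↔ csat S C (runPrefix σ' u) :=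
  csat_congr_profL S C (nodeP_prof S h)

lemma nodeP_congr_prefix {C : Constr} {σ σ' : ℕ → Fin N} {t : ℕ}
    (h : ∀ u ≤ t, σ u = σ' u) : nodeP S C σ t = nodeP S C σ' t := by
  unfold nodeP
  rw [runPrefix_congr fun u hu => h u (le_of_lt hu), h t le_rfl]

/-- Pigeonhole: some product node repeats within the bound. -/
lemma node_repeat (C : Constr) {cc : ℕ} (hC : encConstr C ≤ cc) (hN : 0 < N)
    (σ : ℕ → Fin N) :
    ∃ a b, a < b ∧ b ≤ NBd N cc ∧ nodeP S C σ a = nodeP S C σ b := by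
  classical
  set β := cc + 2 with hβdef
  have hβ : 0 < β := by omega
  have hent : ∀ t, ∀ v ∈ profL S C (runPrefix σ t), v < β := by
    intro t v hv
    simp only [profL, List.mem_map] at hv
    obtain ⟨ek, hek, rfl⟩ := hv
    have := atomsC_k_le C ek hek
    omega
  have hlen : ∀ t, (profL S C (runPrefix σ t)).length = (atomsC C).length := by
    intro t; simp [profL]
  have hlenle : (atomsC C).length ≤ cc + 2 := by
    have := atomsC_len_le C; omega
  have hpc : ∀ t, pcode β (profL S C (runPrefix σ t)) < β ^ (cc + 2) := by
    intro t
    calc pcode β (profL S C (runPrefix σ t)) < β ^ (profL S C (runPrefix σ t)).length :=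
        pcode_lt hβ _ (hent t)
    _ ≤ β ^ (cc + 2) := Nat.pow_le_pow_right (by omega) (by rw [hlen]; exact hlenle)
  set ncode : ℕ → ℕ := fun t => (σ t).val + N * pcode β (profL S C (runPrefix σ t))
    with hncode
  have hnc : ∀ t, ncode t < NBd N cc := by
    intro t
    have h1 : (σ t).val < N := (σ t).isLt
    have h2 := hpc t
    have : ncode t < N * (pcode β (profL S C (runPrefix σ t)) + 1) := by
      simp only [hncode]; nlinarith
    calc ncode t < N * (pcode β (profL S C (runPrefix σ t)) + 1) := this
    _ ≤ N * β ^ (cc + 2) := Nat.mul_le_mul_left N (by omega)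
    _ = NBd N cc := rfl
  have hmaps : ∀ t ∈ Finset.range (NBd N cc + 1), ncode t ∈ Finset.range (NBd N cc) := by
    intro t _; simpa using hnc t
  have hcard : (Finset.range (NBd N cc)).card < (Finset.range (NBd N cc + 1)).card := by
    simp
  obtain ⟨x, hx, y, hy, hxy, hxyeq⟩ :=
    Finset.exists_ne_map_eq_of_card_lt_of_maps_to hcard hmaps
  have key : ∀ {x y : ℕ}, ncode x = ncode y → nodeP S C σ x = nodeP S C σ y := by
    intro x y h
    have hsx := (σ x).isLt
    have hsy := (σ y).isLt
    have hmod : (σ x).val = (σ y).val := by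
      have h1 : ((σ x).val + N * pcode β (profL S C (runPrefix σ x))) % N = (σ x).val := by
        simp [Nat.add_mul_mod_self_left, Nat.mod_eq_of_lt hsx]
      have h2 : ((σ y).val + N * pcode β (profL S C (runPrefix σ y))) % N = (σ y).val := by
        simp [Nat.add_mul_mod_self_left, Nat.mod_eq_of_lt hsy]
      have h' : (σ x).val + N * pcode β (profL S C (runPrefix σ x))
          = (σ y).val + N * pcode β (profL S C (runPrefix σ y)) := h
      rw [← h1, ← h2, h']
    have hdiv : pcode β (profL S C (runPrefix σ x)) = pcode β (profL S C (runPrefix σ y)) := by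
      have : N * pcode β (profL S C (runPrefix σ x)) = N * pcode β (profL S C (runPrefix σ y)) := by
        simp only [hncode] at h; omega
      exact Nat.eq_of_mul_eq_mul_left hN this
    have hprof : profL S C (runPrefix σ x) = profL S C (runPrefix σ y) :=
      pcode_inj hβ _ _ (by rw [hlen, hlen]) (hent x) (hent y) hdiv
    unfold nodeP
    rw [hprof, Fin.ext hmod]
  rcases lt_or_gt_of_ne hxy with h | h
  · exact ⟨x, y, h, by have := Finset.mem_range.mp hy; omega, key hxyeq⟩
  · exact ⟨y, x, h, by have := Finset.mem_range.mp hx; omega, key hxyeq.symm⟩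

/-- Extend a finite path to an infinite run. -/
lemma exists_run_extend (σ : ℕ → Fin N) (m : ℕ) (h : ∀ t < m, S.R (σ t) (σ (t + 1))) :
    ∃ ρ, S.Run ρ ∧ ∀ t ≤ m, ρ t = σ t := by
  classical
  let g : ℕ → Fin N := fun k => Nat.rec (σ m) (fun _ prev => Classical.choose (S.total prev)) k
  have hg : ∀ k, S.R (g k) (g (k + 1)) := fun k => Classical.choose_spec (S.total (g k))
  refine ⟨fun t => if t ≤ m then σ t else g (t - m), fun i => ?_, fun t ht => by simp [ht]⟩
  by_cases h1 : i + 1 ≤ m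
  · simp only [show i ≤ m by omega, if_pos, h1, if_pos]
    exact h i (by omega)
  · by_cases h2 : i ≤ m
    · have him : i = m := by omega
      subst him
      simp only [le_refl, if_pos, h1, if_neg]
      have : i + 1 - i = 1 := by omega
      rw [this]
      exact hg 0
    · simp only [h2, if_neg, h1, if_neg]
      have : i + 1 - m = (i - m) + 1 := by omega
      rw [this]
      exact hg (i - m)

/-- The path obtained by cutting out the segment `[a, a+d)`. -/
def cutSeq (σ : ℕ → Fin N) (a d : ℕ) : ℕ → Fin N := fun t => if t < a then σ t else σ (t + d)

lemma cutSeq_le {σ : ℕ → Fin N} {a b : ℕ} (hab : a < b) (hst : σ a = σ b) :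
    ∀ t ≤ a, cutSeq σ a (b - a) t = σ t := by
  intro t ht
  rcases lt_or_eq_of_le ht with h | h
  · simp [cutSeq, h]
  · subst h
    simp only [cutSeq, lt_irrefl, if_neg, not_lt, le_refl]
    rw [show t + (b - t) = b by omega]
    exact hst.symm

lemma cut_node (C : Constr) (σ : ℕ → Fin N) {a b : ℕ} (hab : a < b)
    (hnode : nodeP S C σ a = nodeP S C σ b) :
    ∀ t, a ≤ t → nodeP S C (cutSeq σ a (b - a)) t = nodeP S C σ (t + (b - a)) := by
  have hst : σ a = σ b := nodeP_state S hnode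
  intro t ht
  induction t, ht using Nat.le_induction with
  | base =>
    have h1 : nodeP S C (cutSeq σ a (b - a)) a = nodeP S C σ a :=
      nodeP_congr_prefix S (cutSeq_le hab hst)
    rw [h1, show a + (b - a) = b by omega]
    exact hnode
  | succ t ht ih =>
    have hstate : cutSeq σ a (b - a) t = σ (t + (b - a)) := nodeP_state S ih
    have hprof := nodeP_prof S ih
    have hd : t + 1 + (b - a) = (t + (b - a)) + 1 := by omega
    unfold nodeP
    rw [hd, runPrefix_succ, runPrefix_succ]
    have hσ' : cutSeq σ a (b - a) (t + 1) = σ (t + (b - a) + 1) := by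
      have harith : t + 1 + (b - a) = t + (b - a) + 1 := by omega
      simp only [cutSeq, if_neg (by omega : ¬ t + 1 < a), harith]
    rw [hσ', hstate]
    exact congrArg _ (profL_snoc_congr S C _ hprof)

end Product

section Pump

variable {N : ℕ} (S : Kripke (Fin N))

lemma mod_succ_eq {x d : ℕ} (hd : 0 < d) :
    (x + 1) % d = if x % d + 1 = d then 0 else x % d + 1 := by
  have h1 : d * (x / d) + x % d = x := Nat.div_add_mod x d
  have h2 : x + 1 = d * (x / d) + (x % d + 1) := by omega
  rw [h2, Nat.mul_add_mod]
  have hu : x % d < d := Nat.mod_lt _ hd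
  by_cases h : x % d + 1 = d
  · rw [if_pos h, h, Nat.mod_self]
  · rw [if_neg h, Nat.mod_eq_of_lt (by omega)]

lemma pump_run (C : Constr) (σ : ℕ → Fin N) {a b : ℕ} (hab : a < b)
    (hnode : nodeP S C σ a = nodeP S C σ b)
    (hR : ∀ t < b, S.R (σ t) (σ (t + 1))) :
    ∃ ρ, S.Run ρ ∧ ρ 0 = σ 0 ∧ ∀ t, ∃ u, u < b ∧ nodeP S C ρ t = nodeP S C σ u := by
  have hst : σ a = σ b := nodeP_state S hnode
  set d := b - a with hd
  have hd0 : 0 < d := by omega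
  set ρ : ℕ → Fin N := fun t => if t < a then σ t else σ (a + (t - a) % d) with hρ
  have hagree : ∀ t ≤ a, ρ t = σ t := by
    intro t ht
    rcases lt_or_eq_of_le ht with h | h
    · simp [hρ, h]
    · subst h; simp [hρ]
  have hρge : ∀ t, a ≤ t → ρ t = σ (a + (t - a) % d) := by
    intro t ht
    rcases eq_or_lt_of_le ht with h | h
    · subst h; simp [hρ]
    · simp [hρ, show ¬ t < a by omega]
  have hrun : S.Run ρ := by
    intro t
    by_cases h1 : t + 1 ≤ a
    · rw [hagree t (by omega), hagree (t + 1) h1]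
      exact hR t (by omega)
    · have ht : a ≤ t := by
        by_contra hc
        push_neg at hc
        have : t + 1 ≤ a := hc
        exact h1 this
      have hρt := hρge t ht
      have hud : (t - a) % d < d := Nat.mod_lt _ hd0
      have hsucc : (t + 1 - a) % d = if (t - a) % d + 1 = d then 0 else (t - a) % d + 1 := by
        rw [show t + 1 - a = (t - a) + 1 by omega]
        exact mod_succ_eq hd0
      have hρt1 : ρ (t + 1) = σ (a + (t + 1 - a) % d) := hρge (t + 1) (by omega)
      by_cases h2 : (t - a) % d + 1 = d
      · rw [hρt, hρt1, hsucc, if_pos h2, show a + ((t - a) % d) = b - 1 by omega,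
          Nat.add_zero, hst]
        have h3 := hR (b - 1) (by omega)
        rwa [show b - 1 + 1 = b by omega] at h3
      · rw [hρt, hρt1, hsucc, if_neg h2, show a + ((t - a) % d + 1) = a + (t - a) % d + 1 by omega]
        exact hR (a + (t - a) % d) (by omega)
  have hnodes : ∀ t, a ≤ t → nodeP S C ρ t = nodeP S C σ (a + (t - a) % d) := by
    intro t ht
    induction t, ht using Nat.le_induction with
    | base =>
      simp only [Nat.sub_self, Nat.zero_mod, Nat.add_zero]
      exact nodeP_congr_prefix S hagree
    | succ t ht ih =>
      have hud : (t - a) % d < d := Nat.mod_lt _ hd0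
      have hstate := nodeP_state S ih
      have hprof := nodeP_prof S ih
      have hsucc : (t + 1 - a) % d = if (t - a) % d + 1 = d then 0 else (t - a) % d + 1 := by
        rw [show t + 1 - a = (t - a) + 1 by omega]
        exact mod_succ_eq hd0
      have hρt1 : ρ (t + 1) = σ (a + (t + 1 - a) % d) := hρge (t + 1) (by omega)
      have hρt : ρ t = σ (a + (t - a) % d) := hρge t ht
      have hprofsucc : profL S C (runPrefix ρ (t + 1))
          = profL S C (runPrefix σ (a + (t - a) % d + 1)) := by
        rw [runPrefix_succ, runPrefix_succ, hρt]
        exact profL_snoc_congr S C _ hprof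
      by_cases h2 : (t - a) % d + 1 = d
      · have hb : a + (t - a) % d + 1 = b := by omega
        have h0 : (t + 1 - a) % d = 0 := by rw [hsucc, if_pos h2]
        unfold nodeP
        rw [hρt1, h0, Nat.add_zero, hprofsucc, hb]
        rw [← nodeP_prof S hnode]
      · have h0 : (t + 1 - a) % d = (t - a) % d + 1 := by rw [hsucc, if_neg h2]
        unfold nodeP
        rw [hρt1, h0, hprofsucc, show a + ((t - a) % d + 1) = a + (t - a) % d + 1 by omega]
  refine ⟨ρ, hrun, hagree 0 (by omega), fun t => ?_⟩
  by_cases ht : t < a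
  · exact ⟨t, by omega, nodeP_congr_prefix S fun u hu => hagree u (by omega)⟩
  · exact ⟨a + (t - a) % d, by have := Nat.mod_lt (t - a) hd0; omega,
      hnodes t (by omega)⟩

end Pump

section Wit

variable {N : ℕ} (S : Kripke (Fin N)) (φ : CForm) (C : Constr) (ψ : CForm)

def EW (q : Fin N) (σ : ℕ → Fin N) (i : ℕ) : Prop :=
  σ 0 = q ∧ (∀ t < i, S.R (σ t) (σ (t + 1))) ∧ (∀ t < i, sat S φ (σ t)) ∧
    sat S ψ (σ i) ∧ csat S C (runPrefix σ i)

lemma sat_eu_iff (q : Fin N) :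
    sat S (.eu φ C ψ) q ↔ ∃ σ i, EW S φ C ψ q σ i := by
  rw [sat]
  constructor
  · rintro ⟨ρ, hrun, h0, i, hψ, hC, hφ⟩
    exact ⟨ρ, i, h0, fun t _ => hrun t, fun t ht => hφ t ht, hψ, hC⟩
  · rintro ⟨σ, i, h0, hR, hφ, hψ, hC⟩
    obtain ⟨ρ, hrun, hagr⟩ := exists_run_extend S σ i hR
    refine ⟨ρ, hrun, by rw [hagr 0 (by omega)]; exact h0, i, ?_, ?_, ?_⟩
    · rw [hagr i le_rfl]; exact hψ
    · rwa [runPrefix_congr fun t ht => hagr t (le_of_lt ht)]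
    · intro j hj; rw [hagr j (le_of_lt hj)]; exact hφ j hj

lemma EW_shrink {cc : ℕ} (hcc : encConstr C ≤ cc) (hN : 0 < N) (q : Fin N) :
    (∃ σ i, EW S φ C ψ q σ i) → ∃ σ i, i ≤ NBd N cc ∧ EW S φ C ψ q σ i := by
  rintro ⟨σ, i, hEW⟩
  induction i using Nat.strong_induction_on generalizing σ with
  | _ i ih =>
    by_cases hle : i ≤ NBd N cc
    · exact ⟨σ, i, hle, hEW⟩
    · push_neg at hle
      obtain ⟨a, b, hab, hbB, hnode⟩ := node_repeat S C hcc hN σ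
      obtain ⟨h0, hR, hφ, hψ, hC⟩ := hEW
      have hst : σ a = σ b := nodeP_state S hnode
      have hle' : ∀ t ≤ a, cutSeq σ a (b - a) t = σ t := cutSeq_le hab hst
      have hge : ∀ t, a ≤ t → cutSeq σ a (b - a) t = σ (t + (b - a)) := by
        intro t ht
        rcases eq_or_lt_of_le ht with h | h
        · rw [← h, hle' a le_rfl, show a + (b - a) = b by omega, hst]
        · simp [cutSeq, show ¬ t < a by omega]
      have hnode' := cut_node S C σ hab hnode
      have hia : a ≤ i - (b - a) := by omega
      refine ih (i - (b - a)) (by omega) (cutSeq σ a (b - a)) ⟨?_, ?_, ?_, ?_, ?_⟩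
      · rw [hle' 0 (by omega)]; exact h0
      · intro t ht
        by_cases h1 : t + 1 ≤ a
        · rw [hle' t (by omega), hle' (t + 1) h1]; exact hR t (by omega)
        · rw [hge t (by omega), hge (t + 1) (by omega),
            show t + 1 + (b - a) = t + (b - a) + 1 by omega]
          exact hR (t + (b - a)) (by omega)
      · intro t ht
        by_cases h1 : t < a
        · rw [hle' t (by omega)]; exact hφ t (by omega)
        · rw [hge t (by omega)]; exact hφ (t + (b - a)) (by omega)
      · rw [hge (i - (b - a)) hia, show i - (b - a) + (b - a) = i by omega]; exact hψ
      · have h2 := hnode' (i - (b - a)) hia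
        rw [show i - (b - a) + (b - a) = i by omega] at h2
        exact (csat_of_nodeP_eq S h2).mpr hC

def BadAt (σ : ℕ → Fin N) (t : ℕ) : Prop :=
  ¬ (sat S ψ (σ t) ∧ csat S C (runPrefix σ t))

lemma BadAt_congr {σ σ' : ℕ → Fin N} {t u : ℕ}
    (h : nodeP S C σ t = nodeP S C σ' u) :
    BadAt S C ψ σ t ↔ BadAt S C ψ σ' u := by
  unfold BadAt
  rw [nodeP_state S h, csat_of_nodeP_eq S h]

def VA (q : Fin N) (σ : ℕ → Fin N) (m : ℕ) : Prop :=
  σ 0 = q ∧ (∀ t < m, S.R (σ t) (σ (t + 1))) ∧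
    (∀ t < m, sat S φ (σ t) ∧ BadAt S C ψ σ t) ∧ BadAt S C ψ σ m ∧ ¬ sat S φ (σ m)

def VB (q : Fin N) (σ : ℕ → Fin N) (NBv : ℕ) : Prop :=
  σ 0 = q ∧ (∀ t < NBv, S.R (σ t) (σ (t + 1))) ∧ ∀ t ≤ NBv, sat S φ (σ t) ∧ BadAt S C ψ σ t

lemma VA_shrink {cc : ℕ} (hcc : encConstr C ≤ cc) (hN : 0 < N) (q : Fin N) :
    (∃ σ m, VA S φ C ψ q σ m) → ∃ σ m, m ≤ NBd N cc ∧ VA S φ C ψ q σ m := by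
  rintro ⟨σ, m, hVA⟩
  induction m using Nat.strong_induction_on generalizing σ with
  | _ m ih =>
    by_cases hle : m ≤ NBd N cc
    · exact ⟨σ, m, hle, hVA⟩
    · push_neg at hle
      obtain ⟨a, b, hab, hbB, hnode⟩ := node_repeat S C hcc hN σ
      obtain ⟨h0, hR, hmid, hbad, hnφ⟩ := hVA
      have hst : σ a = σ b := nodeP_state S hnode
      have hle' : ∀ t ≤ a, cutSeq σ a (b - a) t = σ t := cutSeq_le hab hst
      have hge : ∀ t, a ≤ t → cutSeq σ a (b - a) t = σ (t + (b - a)) := by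
        intro t ht
        rcases eq_or_lt_of_le ht with h | h
        · rw [← h, hle' a le_rfl, show a + (b - a) = b by omega, hst]
        · simp [cutSeq, show ¬ t < a by omega]
      have hnode' := cut_node S C σ hab hnode
      have hnodelt : ∀ t, t < a → nodeP S C (cutSeq σ a (b - a)) t = nodeP S C σ t := by
        intro t ht
        exact nodeP_congr_prefix S fun u hu => hle' u (by omega)
      have hma : a ≤ m - (b - a) := by omega
      refine ih (m - (b - a)) (by omega) (cutSeq σ a (b - a)) ⟨?_, ?_, ?_, ?_, ?_⟩
      · rw [hle' 0 (by omega)]; exact h0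
      · intro t ht
        by_cases h1 : t + 1 ≤ a
        · rw [hle' t (by omega), hle' (t + 1) h1]; exact hR t (by omega)
        · rw [hge t (by omega), hge (t + 1) (by omega),
            show t + 1 + (b - a) = t + (b - a) + 1 by omega]
          exact hR (t + (b - a)) (by omega)
      · intro t ht
        by_cases h1 : t < a
        · constructor
          · rw [hle' t (by omega)]; exact (hmid t (by omega)).1
          · exact (BadAt_congr S C ψ (hnodelt t h1)).mpr (hmid t (by omega)).2
        · constructor
          · rw [hge t (by omega)]; exact (hmid (t + (b - a)) (by omega)).1
          · exact (BadAt_congr S C ψ (hnode' t (by omega))).mpr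
              (hmid (t + (b - a)) (by omega)).2
      · have h2 := hnode' (m - (b - a)) hma
        rw [show m - (b - a) + (b - a) = m by omega] at h2
        exact (BadAt_congr S C ψ h2).mpr hbad
      · rw [hge (m - (b - a)) hma, show m - (b - a) + (b - a) = m by omega]; exact hnφ

lemma sat_au_iff {cc : ℕ} (hcc : encConstr C ≤ cc) (hN : 0 < N) (q : Fin N) :
    sat S (.au φ C ψ) q ↔
      ¬ ((∃ σ m, m ≤ NBd N cc ∧ VA S φ C ψ q σ m) ∨ ∃ σ, VB S φ C ψ q σ (NBd N cc)) := by
  rw [sat]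
  constructor
  · rintro hau (⟨σ, m, hm, h0, hR, hmid, hbad, hnφ⟩ | ⟨σ, h0, hR, hall⟩)
    · obtain ⟨ρ, hrun, hagr⟩ := exists_run_extend S σ m hR
      obtain ⟨i, hψ, hC, hφ⟩ := hau ρ hrun (by rw [hagr 0 (by omega)]; exact h0)
      by_cases him : i ≤ m
      · have heq : ∀ t < i, ρ t = σ t := fun t ht => hagr t (by omega)
        have hbadi : BadAt S C ψ σ i := by
          rcases eq_or_lt_of_le him with h | h
          · rw [h]; exact hbad
          · exact (hmid i h).2
        exact hbadi ⟨by rw [← hagr i him]; exact hψ, by rwa [← runPrefix_congr heq]⟩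
      · exact hnφ (by rw [← hagr m le_rfl]; exact hφ m (by omega))
    · obtain ⟨a, b, hab, hbB, hnode⟩ := node_repeat S C hcc hN σ
      obtain ⟨ρ, hrun, hρ0, hcorr⟩ := pump_run S C σ hab hnode fun t ht => hR t (by omega)
      obtain ⟨i, hψ, hC, hφ⟩ := hau ρ hrun (by rw [hρ0]; exact h0)
      obtain ⟨u, hub, hnode'⟩ := hcorr i
      have hbadu : BadAt S C ψ σ u := (hall u (by omega)).2
      exact hbadu ⟨by rw [← nodeP_state S hnode']; exact hψ, (csat_of_nodeP_eq S hnode').mp hC⟩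
  · intro hne ρ hrun h0
    by_contra hcon
    have hcon' : ∀ i, ¬ (sat S ψ (ρ i) ∧ csat S C (runPrefix ρ i) ∧ ∀ j < i, sat S φ (ρ j)) :=
      fun i h => hcon ⟨i, h⟩
    apply hne
    by_cases hφall : ∀ t, sat S φ (ρ t)
    · right
      have hBad : ∀ t, BadAt S C ψ ρ t := fun t h => hcon' t ⟨h.1, h.2, fun j _ => hφall j⟩
      refine ⟨ρ, ?_⟩
      unfold VB
      exact ⟨h0, fun t _ => hrun t, fun t _ => ⟨hφall t, hBad t⟩⟩
    · left
      push_neg at hφall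
      classical
      have hmmin : ∀ j < Nat.find hφall, sat S φ (ρ j) := by
        intro j hj
        by_contra hc
        exact Nat.find_min hφall hj hc
      have hBad : ∀ t, t ≤ Nat.find hφall → BadAt S C ψ ρ t := fun t ht h =>
        hcon' t ⟨h.1, h.2, fun j hj => hmmin j (by omega)⟩
      have hVA : VA S φ C ψ q ρ (Nat.find hφall) := by
        unfold VA
        exact ⟨h0, fun t _ => hrun t, fun t ht => ⟨hmmin t ht, hBad t (by omega)⟩,
          hBad _ le_rfl, Nat.find_spec hφall⟩
      exact VA_shrink S φ C ψ hcc hN q ⟨ρ, Nat.find hφall, hVA⟩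

end Wit

section Bridge

/-! ### boolean search / lookup utilities -/

lemma bEx_iff (k : ℕ) (p : ℕ → Bool) : bEx k p = true ↔ ∃ i, i < k ∧ p i = true := by
  simp [bEx, List.any_eq_true, List.mem_range]

lemma bAll_iff (k : ℕ) (p : ℕ → Bool) : bAll k p = true ↔ ∀ i < k, p i = true := by
  simp [bAll, List.all_eq_true, List.mem_range]

lemma getD_map_range (g : ℕ → Bool) {s n : ℕ} (h : s < n) :
    ((List.range n).map g).getD s false = g s := by
  rw [List.getD_eq_getElem?_getD, List.getElem?_map, List.getElem?_range h]
  rfl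

lemma edgeB_iff (E : List (ℕ × ℕ)) (x y : ℕ) : edgeB E x y = true ↔ (x, y) ∈ E := by
  simp only [edgeB, List.any_eq_true, Bool.and_eq_true, decide_eq_true_eq]
  constructor
  · rintro ⟨⟨u, v⟩, hm, h1, h2⟩
    subst h1; subst h2; exact hm
  · intro h; exact ⟨(x, y), h, rfl, rfl⟩

lemma lblB_iff (Lb : List (ℕ × ℕ)) (s p : ℕ) : lblB Lb s p = true ↔ (s, p) ∈ Lb := by
  simp only [lblB, List.any_eq_true, Bool.and_eq_true, decide_eq_true_eq]
  constructor
  · rintro ⟨⟨u, v⟩, hm, h1, h2⟩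
    subst h1; subst h2; exact hm
  · intro h; exact ⟨(s, p), h, rfl, rfl⟩

/-! ### digits and codes of finite paths -/

lemma dgt_lt {n : ℕ} (hn : 0 < n) (w t : ℕ) : dgt n w t < n := Nat.mod_lt _ hn

def wcode (n : ℕ) (g : ℕ → ℕ) : ℕ → ℕ
  | 0 => 0
  | t + 1 => wcode n g t + g t * n ^ t

lemma wcode_lt {n : ℕ} {g : ℕ → ℕ} (hn : 0 < n) (hg : ∀ t, g t < n) :
    ∀ L, wcode n g L < n ^ L := by
  intro L
  induction L with
  | zero => simp [wcode]
  | succ L ih =>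
    have h1 : g L * n ^ L ≤ (n - 1) * n ^ L := Nat.mul_le_mul_right _ (by have := hg L; omega)
    have h2 : 0 < n ^ L := Nat.pow_pos hn
    have : wcode n g L + g L * n ^ L < n ^ L + (n - 1) * n ^ L := by omega
    calc wcode n g (L + 1) = wcode n g L + g L * n ^ L := rfl
    _ < n ^ L + (n - 1) * n ^ L := this
    _ = ((n - 1) + 1) * n ^ L := by ring
    _ = n ^ L * n := by rw [show (n - 1) + 1 = n from by omega, Nat.mul_comm]
    _ = n ^ (L + 1) := by ring

lemma dgt_wcode {n : ℕ} {g : ℕ → ℕ} (hn : 0 < n) (hg : ∀ t, g t < n) :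
    ∀ L t, t < L → dgt n (wcode n g L) t = g t := by
  intro L
  induction L with
  | zero => omega
  | succ L ih =>
    intro t ht
    by_cases h : t < L
    · have hdvd : n ^ t ∣ g L * n ^ L :=
        Dvd.dvd.mul_left (pow_dvd_pow n (by omega)) _
      unfold dgt
      show (wcode n g L + g L * n ^ L) / n ^ t % n = g t
      rw [Nat.add_div_of_dvd_left hdvd]
      have hpow : g L * n ^ L / n ^ t = g L * n ^ (L - t) := by
        have hL : n ^ L = n ^ (L - t) * n ^ t := by rw [← pow_add]; congr 1; omega
        rw [hL, ← Nat.mul_assoc, Nat.mul_div_cancel _ (Nat.pow_pos hn)]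
      rw [hpow]
      have hdvd2 : n ∣ g L * n ^ (L - t) := by
        have : n ∣ n ^ (L - t) := dvd_pow_self n (by omega)
        exact Dvd.dvd.mul_left this _
      obtain ⟨m, hm⟩ := hdvd2
      rw [hm, show wcode n g L / n ^ t + n * m = wcode n g L / n ^ t + m * n by ring,
        Nat.add_mul_mod_self_right]
      exact ih t h
    · have ht' : t = L := by omega
      subst ht'
      unfold dgt
      show (wcode n g t + g t * n ^ t) / n ^ t % n = g t
      rw [Nat.add_mul_div_right _ _ (Nat.pow_pos hn),
        Nat.div_eq_of_lt (wcode_lt hn hg t), Nat.zero_add, Nat.mod_eq_of_lt (hg t)]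

/-! ### table stability -/

lemma ctab_length (T : List (List Bool)) (n w i : ℕ) : ∀ k, (ctab T n w i k).length = k := by
  intro k
  induction k with
  | zero => rfl
  | succ k ih => simp [ctab, ih]

lemma ctab_getD (T : List (List Bool)) (n w i : ℕ) {c : ℕ} :
    ∀ {k}, c < k → (ctab T n w i k).getD c (0, false) = cstep T n w i (ctab T n w i c) c := by
  intro k
  induction k with
  | zero => omega
  | succ k ih =>
    intro hc
    by_cases h : c < k
    · rw [show ctab T n w i (k+1) = ctab T n w i k ++ [cstep T n w i (ctab T n w i k) k] from rfl,
        List.getD_append _ _ _ _ (by rw [ctab_length]; exact h)]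
      exact ih h
    · have hck : c = k := by omega
      subst hck
      rw [show ctab T n w i (c+1) = ctab T n w i c ++ [cstep T n w i (ctab T n w i c) c] from rfl,
        List.getD_append_right _ _ _ _ (by rw [ctab_length]), ctab_length]
      simp

lemma evL_eq (T : List (List Bool)) (n w i c : ℕ) :
    evL T n w i c = (cstep T n w i (ctab T n w i c) c).1 := by
  unfold evL
  rw [ctab_getD T n w i (by omega)]

lemma evC_eq (T : List (List Bool)) (n w i c : ℕ) :
    evC T n w i c = (cstep T n w i (ctab T n w i c) c).2 := by
  unfold evC
  rw [ctab_getD T n w i (by omega)]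

lemma ftab_length (n : ℕ) (E Lb : List (ℕ × ℕ)) : ∀ k, (ftab n E Lb k).length = k := by
  intro k
  induction k with
  | zero => rfl
  | succ k ih => simp [ftab, ih]

lemma ftab_getD (n : ℕ) (E Lb : List (ℕ × ℕ)) {c : ℕ} :
    ∀ {k}, c < k → (ftab n E Lb k).getD c [] = fstep n E Lb (ftab n E Lb c) c := by
  intro k
  induction k with
  | zero => omega
  | succ k ih =>
    intro hc
    by_cases h : c < k
    · rw [show ftab n E Lb (k+1) = ftab n E Lb k ++ [fstep n E Lb (ftab n E Lb k) k] from rfl,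
        List.getD_append _ _ _ _ (by rw [ftab_length]; exact h)]
      exact ih h
    · have hck : c = k := by omega
      subst hck
      rw [show ftab n E Lb (c+1) = ftab n E Lb c ++ [fstep n E Lb (ftab n E Lb c) c] from rfl,
        List.getD_append_right _ _ _ _ (by rw [ftab_length]), ftab_length]
      simp

lemma lkB_ftab {n : ℕ} {E Lb : List (ℕ × ℕ)} {c K s : ℕ} (h : c < K) :
    lkB (ftab n E Lb K) c s = (fstep n E Lb (ftab n E Lb c) c).getD s false := by
  unfold lkB
  rw [ftab_getD n E Lb h]

/-! ### code inequalities -/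

lemma lt_pair_tag {t r x : ℕ} (ht : 1 ≤ t) (hx : x ≤ r) : x < Nat.pair t r :=
  lt_of_le_of_lt hx (pair_gt_right r ht)

lemma pair_eq_zero {a b : ℕ} (h : Nat.pair a b = 0) : a = 0 ∧ b = 0 := by
  have h1 := Nat.left_le_pair a b
  have h2 := Nat.right_le_pair a b
  omega

/-! ### counting bridge -/

lemma cnt_bridge {N : ℕ} (T : List (List Bool)) (n w fc : ℕ) (σ : ℕ → Fin N)
    (p : Fin N → Prop) (i : ℕ) (hw : ∀ t < i, dgt n w t = (σ t).val)
    (hlk : ∀ s : Fin N, lkB T fc s.val = true ↔ p s) :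
    cntB T n w i fc = countSat p (runPrefix σ i) := by
  induction i with
  | zero => simp [cntB, runPrefix_zero, countSat]
  | succ i ih =>
    have hwi : ∀ t < i, dgt n w t = (σ t).val := fun t ht => hw t (by omega)
    have hstep : cntB T n w (i + 1) fc
        = cntB T n w i fc + (if lkB T fc (dgt n w i) = true then 1 else 0) := by
      unfold cntB
      rw [List.range_succ, List.filter_append, List.length_append]
      congr 1
      by_cases h : lkB T fc (dgt n w i) = true <;> simp [h]
    rw [hstep, runPrefix_succ, countSat_append, ih hwi]
    congr 1
    rw [hw i (by omega)]
    by_cases h : p (σ i)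
    · rw [if_pos ((hlk (σ i)).mpr h)]
      simp [countSat, h]
    · rw [if_neg (by rw [hlk (σ i)]; exact h)]
      simp [countSat, h]

end Bridge

section MainThm

/-! ### code inequalities -/

lemma encForm_lt_and_left (φ ψ : CForm) : encForm φ < encForm (.and φ ψ) := by
  simp only [encForm]; exact lt_pair_tag (by omega) (Nat.left_le_pair _ _)

lemma encForm_lt_and_right (φ ψ : CForm) : encForm ψ < encForm (.and φ ψ) := by
  simp only [encForm]; exact lt_pair_tag (by omega) (Nat.right_le_pair _ _)

lemma encForm_lt_not (φ : CForm) : encForm φ < encForm (.not φ) := by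
  simp only [encForm]; exact lt_pair_tag (by omega) le_rfl

lemma encForm_lt_eu_left (φ : CForm) (C : Constr) (ψ : CForm) :
    encForm φ < encForm (.eu φ C ψ) := by
  simp only [encForm]; exact lt_pair_tag (by omega) (Nat.left_le_pair _ _)

lemma encConstr_lt_eu (φ : CForm) (C : Constr) (ψ : CForm) :
    encConstr C < encForm (.eu φ C ψ) := by
  simp only [encForm]
  exact lt_pair_tag (by omega) (le_trans (Nat.left_le_pair _ _) (Nat.right_le_pair _ _))

lemma encForm_lt_eu_right (φ : CForm) (C : Constr) (ψ : CForm) :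
    encForm ψ < encForm (.eu φ C ψ) := by
  simp only [encForm]
  exact lt_pair_tag (by omega) (le_trans (Nat.right_le_pair _ _) (Nat.right_le_pair _ _))

lemma encForm_lt_au_left (φ : CForm) (C : Constr) (ψ : CForm) :
    encForm φ < encForm (.au φ C ψ) := by
  simp only [encForm]; exact lt_pair_tag (by omega) (Nat.left_le_pair _ _)

lemma encConstr_lt_au (φ : CForm) (C : Constr) (ψ : CForm) :
    encConstr C < encForm (.au φ C ψ) := by
  simp only [encForm]
  exact lt_pair_tag (by omega) (le_trans (Nat.left_le_pair _ _) (Nat.right_le_pair _ _))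

lemma encForm_lt_au_right (φ : CForm) (C : Constr) (ψ : CForm) :
    encForm ψ < encForm (.au φ C ψ) := by
  simp only [encForm]
  exact lt_pair_tag (by omega) (le_trans (Nat.right_le_pair _ _) (Nat.right_le_pair _ _))

lemma encForm_le_term (a : ℕ) (φ : CForm) : encForm φ ≤ encLin (.term a φ) := by
  simp only [encLin]
  exact le_trans (Nat.right_le_pair _ _) (Nat.right_le_pair _ _)

lemma encLin_lt_add_left (e f : LinExp) : encLin e < encLin (.add e f) := by
  simp only [encLin]; exact lt_pair_tag (by omega) (Nat.left_le_pair _ _)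

lemma encLin_lt_add_right (e f : LinExp) : encLin f < encLin (.add e f) := by
  simp only [encLin]; exact lt_pair_tag (by omega) (Nat.right_le_pair _ _)

lemma encLin_le_atomic (e : LinExp) (c : Cmp) (k : ℕ) :
    encLin e ≤ encConstr (.atomic e c k) := by
  simp only [encConstr]
  exact le_trans (Nat.left_le_pair _ _) (Nat.right_le_pair _ _)

lemma encConstr_lt_cand_left (C D : Constr) : encConstr C < encConstr (.cand C D) := by
  simp only [encConstr]; exact lt_pair_tag (by omega) (Nat.left_le_pair _ _)

lemma encConstr_lt_cand_right (C D : Constr) : encConstr D < encConstr (.cand C D) := by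
  simp only [encConstr]; exact lt_pair_tag (by omega) (Nat.right_le_pair _ _)

lemma encConstr_lt_cnot (C : Constr) : encConstr C < encConstr (.cnot C) := by
  simp only [encConstr]; exact lt_pair_tag (by omega) le_rfl

/-! ### The main mutual correctness theorem -/

mutual

theorem mainF (M : FinKS) (hM : M.Total) (Φ : CForm) (K : ℕ) (hK : encForm Φ < K)
    (q : Fin M.n) :
    lkB (ftab M.n M.edges M.labels K) (encForm Φ) q.val = true ↔ sat (M.toKripke hM) Φ q := by
  cases Φ with
  | atom p =>
    rw [lkB_ftab hK]
    unfold fstep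
    simp only [encForm, Nat.unpair_pair]
    norm_num
    rw [lblB_iff, sat]
    exact Iff.rfl
  | and φ ψ =>
    rw [lkB_ftab hK]
    unfold fstep
    simp only [encForm, Nat.unpair_pair]
    norm_num
    have h1 := mainF M hM φ _ (encForm_lt_and_left φ ψ) q
    have h2 := mainF M hM ψ _ (encForm_lt_and_right φ ψ) q
    simp only [encForm] at h1 h2
    rw [sat, h1, h2]
  | not φ =>
    rw [lkB_ftab hK]
    unfold fstep
    simp only [encForm, Nat.unpair_pair]
    norm_num
    have h1 := mainF M hM φ _ (encForm_lt_not φ) q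
    simp only [encForm] at h1
    rw [sat, ← h1]
    simp
  | eu φ C ψ =>
    have hφlt := encForm_lt_eu_left φ C ψ
    have hClt := encConstr_lt_eu φ C ψ
    have hψlt := encForm_lt_eu_right φ C ψ
    have hN : 0 < M.n := q.pos
    have hstep : lkB (ftab M.n M.edges M.labels K) (encForm (.eu φ C ψ)) q.val
        = euB M.n M.edges (ftab M.n M.edges M.labels (encForm (.eu φ C ψ)))
            (encForm (.eu φ C ψ)) (encForm φ) (encConstr C) (encForm ψ) q.val := by
      rw [lkB_ftab hK]
      unfold fstep
      simp only [encForm, Nat.unpair_pair]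
      norm_num
    rw [hstep, sat_eu_iff]
    constructor
    · intro h
      unfold euB at h
      obtain ⟨i, hiB, h⟩ := (bEx_iff _ _).mp h
      obtain ⟨w, hwB, h⟩ := (bEx_iff _ _).mp h
      simp only [Bool.and_eq_true, decide_eq_true_eq] at h
      obtain ⟨⟨⟨⟨h0, hpath⟩, hphi⟩, hpsi⟩, hevc⟩ := h
      set σ : ℕ → Fin M.n := fun t => ⟨dgt M.n w t, dgt_lt hN w t⟩ with hσ
      refine ⟨σ, i, ?_⟩
      unfold EW
      refine ⟨Fin.ext h0, ?_, ?_, ?_, ?_⟩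
      · intro t ht
        have := (bAll_iff _ _).mp hpath t ht
        rw [edgeB_iff] at this
        exact this
      · intro t ht
        have := (bAll_iff _ _).mp hphi t ht
        exact (mainF M hM φ _ hφlt (σ t)).mp this
      · exact (mainF M hM ψ _ hψlt (σ i)).mp hpsi
      · exact (mainC M hM C _ hClt σ w i fun t _ => rfl).mp hevc
    · intro hsat
      obtain ⟨σ, i, hiB, h0, hR, hφ, hψ, hC⟩ :=
        EW_shrink (M.toKripke hM) φ C ψ (le_of_lt hClt) hN q hsat
      unfold euB
      rw [bEx_iff]
      refine ⟨i, by omega, ?_⟩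
      rw [bEx_iff]
      refine ⟨wcode M.n (fun t => (σ t).val) (i + 1),
        wcode_lt hN (fun t => (σ t).isLt) (i + 1), ?_⟩
      have hdg : ∀ t < i + 1, dgt M.n (wcode M.n (fun t => (σ t).val) (i + 1)) t = (σ t).val :=
        fun t ht => dgt_wcode hN (fun u => (σ u).isLt) (i + 1) t ht
      simp only [Bool.and_eq_true, decide_eq_true_eq]
      refine ⟨⟨⟨⟨?_, ?_⟩, ?_⟩, ?_⟩, ?_⟩
      · rw [hdg 0 (by omega), h0]
      · unfold isPathB
        rw [bAll_iff]
        intro t ht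
        rw [edgeB_iff, hdg t (by omega), hdg (t + 1) (by omega)]
        exact hR t ht
      · rw [bAll_iff]
        intro t ht
        rw [hdg t (by omega)]
        exact (mainF M hM φ _ hφlt (σ t)).mpr (hφ t ht)
      · rw [hdg i (by omega)]
        exact (mainF M hM ψ _ hψlt (σ i)).mpr hψ
      · exact (mainC M hM C _ hClt σ _ i fun t ht => hdg t (by omega)).mpr hC
  | au φ C ψ =>
    have hφlt := encForm_lt_au_left φ C ψ
    have hClt := encConstr_lt_au φ C ψ
    have hψlt := encForm_lt_au_right φ C ψ
    have hN : 0 < M.n := q.pos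
    have hstep : lkB (ftab M.n M.edges M.labels K) (encForm (.au φ C ψ)) q.val
        = !auvB M.n M.edges (ftab M.n M.edges M.labels (encForm (.au φ C ψ)))
            (encForm (.au φ C ψ)) (encForm φ) (encConstr C) (encForm ψ) q.val := by
      rw [lkB_ftab hK]
      unfold fstep
      simp only [encForm, Nat.unpair_pair]
      norm_num
    have hauv : auvB M.n M.edges (ftab M.n M.edges M.labels (encForm (.au φ C ψ)))
        (encForm (.au φ C ψ)) (encForm φ) (encConstr C) (encForm ψ) q.val = true ↔
        ((∃ σ m, m ≤ NBd M.n (encForm (.au φ C ψ)) ∧ VA (M.toKripke hM) φ C ψ q σ m) ∨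
          ∃ σ, VB (M.toKripke hM) φ C ψ q σ (NBd M.n (encForm (.au φ C ψ)))) := by
      unfold auvB
      rw [Bool.or_eq_true]
      constructor
      · rintro (h | h)
        · left
          obtain ⟨m, hmB, h⟩ := (bEx_iff _ _).mp h
          obtain ⟨w, hwB, h⟩ := (bEx_iff _ _).mp h
          simp only [Bool.and_eq_true, decide_eq_true_eq, Bool.not_eq_true'] at h
          obtain ⟨⟨⟨⟨h0, hpath⟩, hmid⟩, hbad⟩, hnφ⟩ := h
          set σ : ℕ → Fin M.n := fun t => ⟨dgt M.n w t, dgt_lt hN w t⟩ with hσ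
          have hbadiff : ∀ t, (badB (ftab M.n M.edges M.labels (encForm (.au φ C ψ))) M.n w
              (encConstr C) (encForm ψ) t = true ↔ BadAt (M.toKripke hM) C ψ σ t) := by
            intro t
            unfold badB BadAt
            simp only [Bool.not_eq_true', ← Bool.not_eq_true, Bool.and_eq_true, not_and]
            rw [mainF M hM ψ _ hψlt (σ t),
              mainC M hM C _ hClt σ w t (fun u _ => rfl)]
          refine ⟨σ, m, by omega, ?_⟩
          unfold VA
          refine ⟨Fin.ext h0, ?_, ?_, ?_, ?_⟩
          · intro t ht
            have := (bAll_iff _ _).mp hpath t ht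
            rw [edgeB_iff] at this
            exact this
          · intro t ht
            have := (bAll_iff _ _).mp hmid t ht
            rw [Bool.and_eq_true] at this
            exact ⟨(mainF M hM φ _ hφlt (σ t)).mp this.1, (hbadiff t).mp this.2⟩
          · exact (hbadiff m).mp hbad
          · rw [← mainF M hM φ _ hφlt (σ m)]
            simp [hnφ, hσ]
        · right
          obtain ⟨w, hwB, h⟩ := (bEx_iff _ _).mp h
          simp only [Bool.and_eq_true, decide_eq_true_eq] at h
          obtain ⟨⟨h0, hpath⟩, hall⟩ := h
          set σ : ℕ → Fin M.n := fun t => ⟨dgt M.n w t, dgt_lt hN w t⟩ with hσ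
          have hbadiff : ∀ t, (badB (ftab M.n M.edges M.labels (encForm (.au φ C ψ))) M.n w
              (encConstr C) (encForm ψ) t = true ↔ BadAt (M.toKripke hM) C ψ σ t) := by
            intro t
            unfold badB BadAt
            simp only [Bool.not_eq_true', ← Bool.not_eq_true, Bool.and_eq_true, not_and]
            rw [mainF M hM ψ _ hψlt (σ t),
              mainC M hM C _ hClt σ w t (fun u _ => rfl)]
          refine ⟨σ, ?_⟩
          unfold VB
          refine ⟨Fin.ext h0, ?_, ?_⟩
          · intro t ht
            have := (bAll_iff _ _).mp hpath t ht
            rw [edgeB_iff] at this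
            exact this
          · intro t ht
            have := (bAll_iff _ _).mp hall t (by omega)
            rw [Bool.and_eq_true] at this
            exact ⟨(mainF M hM φ _ hφlt (σ t)).mp this.1, (hbadiff t).mp this.2⟩
      · rintro (⟨σ, m, hmB, h0, hR, hmid, hbad, hnφ⟩ | ⟨σ, h0, hR, hall⟩)
        · left
          rw [bEx_iff]
          refine ⟨m, by omega, ?_⟩
          rw [bEx_iff]
          refine ⟨wcode M.n (fun t => (σ t).val) (m + 1),
            wcode_lt hN (fun t => (σ t).isLt) (m + 1), ?_⟩
          have hdg : ∀ t < m + 1,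
              dgt M.n (wcode M.n (fun t => (σ t).val) (m + 1)) t = (σ t).val :=
            fun t ht => dgt_wcode hN (fun u => (σ u).isLt) (m + 1) t ht
          have hbadiff : ∀ t, t ≤ m →
              (badB (ftab M.n M.edges M.labels (encForm (.au φ C ψ))) M.n
                (wcode M.n (fun t => (σ t).val) (m + 1)) (encConstr C) (encForm ψ) t = true
                ↔ BadAt (M.toKripke hM) C ψ σ t) := by
            intro t ht
            unfold badB BadAt
            simp only [Bool.not_eq_true', ← Bool.not_eq_true, Bool.and_eq_true, not_and]
            rw [hdg t (by omega), mainF M hM ψ _ hψlt (σ t),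
              mainC M hM C _ hClt σ _ t (fun u hu => hdg u (by omega))]
          simp only [Bool.and_eq_true, decide_eq_true_eq, Bool.not_eq_true']
          refine ⟨⟨⟨⟨?_, ?_⟩, ?_⟩, ?_⟩, ?_⟩
          · rw [hdg 0 (by omega), h0]
          · unfold isPathB
            rw [bAll_iff]
            intro t ht
            rw [edgeB_iff, hdg t (by omega), hdg (t + 1) (by omega)]
            exact hR t ht
          · rw [bAll_iff]
            intro t ht
            rw [Bool.and_eq_true, hdg t (by omega)]
            exact ⟨(mainF M hM φ _ hφlt (σ t)).mpr (hmid t ht).1,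
              (hbadiff t (by omega)).mpr (hmid t ht).2⟩
          · exact (hbadiff m le_rfl).mpr hbad
          · rw [hdg m (by omega), ← Bool.not_eq_true, mainF M hM φ _ hφlt (σ m)]
            exact hnφ
        · right
          rw [bEx_iff]
          refine ⟨wcode M.n (fun t => (σ t).val) (NBd M.n (encForm (.au φ C ψ)) + 1),
            wcode_lt hN (fun t => (σ t).isLt) _, ?_⟩
          have hdg : ∀ t < NBd M.n (encForm (.au φ C ψ)) + 1,
              dgt M.n (wcode M.n (fun t => (σ t).val) (NBd M.n (encForm (.au φ C ψ)) + 1)) t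
                = (σ t).val :=
            fun t ht => dgt_wcode hN (fun u => (σ u).isLt) _ t ht
          have hbadiff : ∀ t, t ≤ NBd M.n (encForm (.au φ C ψ)) →
              (badB (ftab M.n M.edges M.labels (encForm (.au φ C ψ))) M.n
                (wcode M.n (fun t => (σ t).val) (NBd M.n (encForm (.au φ C ψ)) + 1))
                (encConstr C) (encForm ψ) t = true
                ↔ BadAt (M.toKripke hM) C ψ σ t) := by
            intro t ht
            unfold badB BadAt
            simp only [Bool.not_eq_true', ← Bool.not_eq_true, Bool.and_eq_true, not_and]
            rw [hdg t (by omega), mainF M hM ψ _ hψlt (σ t),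
              mainC M hM C _ hClt σ _ t (fun u hu => hdg u (by omega))]
          simp only [Bool.and_eq_true, decide_eq_true_eq]
          refine ⟨⟨?_, ?_⟩, ?_⟩
          · rw [hdg 0 (by omega), h0]
          · unfold isPathB
            rw [bAll_iff]
            intro t ht
            rw [edgeB_iff, hdg t (by omega), hdg (t + 1) (by omega)]
            exact hR t ht
          · rw [bAll_iff]
            intro t ht
            rw [Bool.and_eq_true, hdg t (by omega)]
            exact ⟨(mainF M hM φ _ hφlt (σ t)).mpr (hall t (by omega)).1,
              (hbadiff t (by omega)).mpr (hall t (by omega)).2⟩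
    rw [hstep, sat_au_iff (M.toKripke hM) φ C ψ (le_of_lt hClt) hN q]
    rw [← hauv]
    cases auvB M.n M.edges (ftab M.n M.edges M.labels (encForm (.au φ C ψ)))
        (encForm (.au φ C ψ)) (encForm φ) (encConstr C) (encForm ψ) q.val <;> simp

theorem mainL (M : FinKS) (hM : M.Total) (e : LinExp) (K : ℕ) (hK : encLin e < K)
    (σ : ℕ → Fin M.n) (w i : ℕ) (hw : ∀ t < i, dgt M.n w t = (σ t).val) :
    evL (ftab M.n M.edges M.labels K) M.n w i (encLin e)
      = lval (M.toKripke hM) e (runPrefix σ i) := by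
  cases e with
  | term a φ =>
    rw [evL_eq]
    unfold cstep
    simp only [encLin, Nat.unpair_pair]
    norm_num
    rw [cnt_bridge (ftab M.n M.edges M.labels K) M.n w (encForm φ) σ
      (fun s => sat (M.toKripke hM) φ s) i hw
      (fun s => mainF M hM φ K (lt_of_le_of_lt (encForm_le_term a φ) hK) s)]
    simp [lval]
  | add e f =>
    have he := encLin_lt_add_left e f
    have hf := encLin_lt_add_right e f
    rw [evL_eq]
    unfold cstep
    simp only [encLin, Nat.unpair_pair]
    norm_num
    simp only [← List.getD_eq_getElem?_getD]
    rw [ctab_getD _ _ _ _ (by simp only [encLin] at he ⊢; exact he),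
      ctab_getD _ _ _ _ (by simp only [encLin] at hf ⊢; exact hf),
      ← evL_eq, ← evL_eq,
      mainL M hM e K (lt_trans he hK) σ w i hw,
      mainL M hM f K (lt_trans hf hK) σ w i hw]
    simp [lval]

theorem mainC (M : FinKS) (hM : M.Total) (C : Constr) (K : ℕ) (hK : encConstr C < K)
    (σ : ℕ → Fin M.n) (w i : ℕ) (hw : ∀ t < i, dgt M.n w t = (σ t).val) :
    (evC (ftab M.n M.edges M.labels K) M.n w i (encConstr C) = true
      ↔ csat (M.toKripke hM) C (runPrefix σ i)) := by
  cases C with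
  | atomic e c k =>
    have hle : encLin e ≤ encConstr (.atomic e c k) := encLin_le_atomic e c k
    rcases lt_or_eq_of_le hle with hlt | heq
    · rw [evC_eq]
      unfold cstep
      simp only [encConstr, Nat.unpair_pair]
      norm_num
      have hlt' := hlt
      simp only [encConstr] at hlt'
      rw [if_pos hlt']
      simp only [← List.getD_eq_getElem?_getD]
      rw [ctab_getD _ _ _ _ hlt', ← evL_eq,
        mainL M hM e K (lt_of_le_of_lt hle hK) σ w i hw]
      cases c <;> simp [cmpB, csat, Cmp.eval]
    · -- degenerate case: code of constraint equals code of its linear expression;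
      -- this forces everything to be zero
      cases c with
      | lt =>
        have heq' : encLin e = Nat.pair 0 (Nat.pair (encLin e) (Nat.pair 0 k)) := by
          simpa [encConstr] using heq
        have h2 : Nat.pair (encLin e) (Nat.pair 0 k)
            ≤ Nat.pair 0 (Nat.pair (encLin e) (Nat.pair 0 k)) := Nat.right_le_pair _ _
        have h3 : encLin e + Nat.pair 0 k ≤ Nat.pair (encLin e) (Nat.pair 0 k) :=
          Nat.add_le_pair _ _
        have h4 : encLin e ≤ Nat.pair (encLin e) (Nat.pair 0 k) := Nat.left_le_pair _ _
        have hY : Nat.pair 0 k = 0 := by omega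
        have hk : k = 0 := (pair_eq_zero hY).2
        have hXe : Nat.pair (encLin e) (Nat.pair 0 k) = encLin e := by omega
        rw [hY] at hXe
        have he0 : encLin e = 0 := by
          have hsq : Nat.pair (encLin e) 0 = encLin e * encLin e + encLin e := by
            simp [Nat.pair]
          have h5 : encLin e * encLin e = 0 := by omega
          exact mul_self_eq_zero.mp h5
        have hlv : lval (M.toKripke hM) e (runPrefix σ i) = 0 := by
          cases e with
          | term a φ =>
            have hz : Nat.pair a (encForm φ) = 0 := by
              have h6 : encLin (.term a φ) = Nat.pair 0 (Nat.pair a (encForm φ)) := rfl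
              have h7 := Nat.right_le_pair 0 (Nat.pair a (encForm φ))
              rw [h6] at he0
              omega
            have ha : a = 0 := (pair_eq_zero hz).1
            simp [lval, ha]
          | add e f =>
            exfalso
            have h7 : encLin (.add e f) = Nat.pair 1 (Nat.pair (encLin e) (encLin f)) := rfl
            have h8 := Nat.add_le_pair 1 (Nat.pair (encLin e) (encLin f))
            omega
        rw [evC_eq]
        unfold cstep
        simp only [encConstr, Nat.unpair_pair]
        simp [he0, hk, Nat.pair, cmpB, csat, Cmp.eval, hlv]
      | le =>
        exfalso
        have heq' : encLin e = Nat.pair 0 (Nat.pair (encLin e) (Nat.pair 1 k)) := by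
          simpa [encConstr] using heq
        have h2 : Nat.pair (encLin e) (Nat.pair 1 k)
            ≤ Nat.pair 0 (Nat.pair (encLin e) (Nat.pair 1 k)) := Nat.right_le_pair _ _
        have h3 : encLin e + Nat.pair 1 k ≤ Nat.pair (encLin e) (Nat.pair 1 k) :=
          Nat.add_le_pair _ _
        have h5 : 1 + k ≤ Nat.pair 1 k := Nat.add_le_pair _ _
        omega
      | eq =>
        exfalso
        have heq' : encLin e = Nat.pair 0 (Nat.pair (encLin e) (Nat.pair 2 k)) := by
          simpa [encConstr] using heq
        have h2 : Nat.pair (encLin e) (Nat.pair 2 k)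
            ≤ Nat.pair 0 (Nat.pair (encLin e) (Nat.pair 2 k)) := Nat.right_le_pair _ _
        have h3 : encLin e + Nat.pair 2 k ≤ Nat.pair (encLin e) (Nat.pair 2 k) :=
          Nat.add_le_pair _ _
        have h5 : 2 + k ≤ Nat.pair 2 k := Nat.add_le_pair _ _
        omega
      | ge =>
        exfalso
        have heq' : encLin e = Nat.pair 0 (Nat.pair (encLin e) (Nat.pair 3 k)) := by
          simpa [encConstr] using heq
        have h2 : Nat.pair (encLin e) (Nat.pair 3 k)
            ≤ Nat.pair 0 (Nat.pair (encLin e) (Nat.pair 3 k)) := Nat.right_le_pair _ _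
        have h3 : encLin e + Nat.pair 3 k ≤ Nat.pair (encLin e) (Nat.pair 3 k) :=
          Nat.add_le_pair _ _
        have h5 : 3 + k ≤ Nat.pair 3 k := Nat.add_le_pair _ _
        omega
      | gt =>
        exfalso
        have heq' : encLin e = Nat.pair 0 (Nat.pair (encLin e) (Nat.pair 4 k)) := by
          simpa [encConstr] using heq
        have h2 : Nat.pair (encLin e) (Nat.pair 4 k)
            ≤ Nat.pair 0 (Nat.pair (encLin e) (Nat.pair 4 k)) := Nat.right_le_pair _ _
        have h3 : encLin e + Nat.pair 4 k ≤ Nat.pair (encLin e) (Nat.pair 4 k) :=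
          Nat.add_le_pair _ _
        have h5 : 4 + k ≤ Nat.pair 4 k := Nat.add_le_pair _ _
        omega
  | cand C D =>
    have hC := encConstr_lt_cand_left C D
    have hD := encConstr_lt_cand_right C D
    rw [evC_eq]
    unfold cstep
    simp only [encConstr, Nat.unpair_pair]
    norm_num
    simp only [← List.getD_eq_getElem?_getD]
    rw [ctab_getD _ _ _ _ (by simp only [encConstr] at hC ⊢; exact hC),
      ctab_getD _ _ _ _ (by simp only [encConstr] at hD ⊢; exact hD),
      ← evC_eq, ← evC_eq]
    rw [mainC M hM C K (lt_trans hC hK) σ w i hw, mainC M hM D K (lt_trans hD hK) σ w i hw,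
      csat]
  | cnot C =>
    have hC := encConstr_lt_cnot C
    rw [evC_eq]
    unfold cstep
    simp only [encConstr, Nat.unpair_pair]
    norm_num
    simp only [← List.getD_eq_getElem?_getD]
    rw [ctab_getD _ _ _ _ (by simp only [encConstr] at hC ⊢; exact hC), ← evC_eq]
    rw [csat, ← mainC M hM C K (lt_trans hC hK) σ w i hw]
    simp

end

end MainThm

end MCAux

/-- model checking CCTLb is decidable: some computable
function decides, with respect to the natural encoding of triples
`(S, q, Φ)`, whether `q ⊨_S Φ`. -/
theorem cctlb_mc_decidable :
    ∃ f : ℕ → Bool, Computable f ∧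
      ∀ (M : FinKS) (hM : M.Total) (q : Fin M.n) (Φ : CForm),
        (f (encTriple M (q : ℕ) Φ) = true ↔ sat (M.toKripke hM) Φ q) := by
  refine ⟨MCAux.fMain, MCAux.fMain_computable, ?_⟩
  intro M hM q Φ
  have hval : MCAux.fMain (encTriple M (q : ℕ) Φ)
      = MCAux.lkB (MCAux.ftab M.n M.edges M.labels (encForm Φ + 1)) (encForm Φ) (q : ℕ) := by
    unfold MCAux.fMain encTriple encKS
    simp only [Nat.unpair_pair, Encodable.encodek, Option.getD_some]
  rw [hval]
  exact MCAux.mainF M hM Φ (encForm Φ + 1) (by omega) q
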